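/- arXiv:1912.07566 — 4 statements merged into one kernel-verified Lean document; each statement's English description precedes it below -/
import Mathlib

section
/- There exist constants C > 0 and D₀ > 0 such that for every real D ≥ D₀ one has |S(D) − (√3/2)·D²| ≤ C·D^{4/5}. -/
/-- Difference of two lattice points. -/
def sub2 (P Q : ℤ × ℤ) : ℤ × ℤ := (P.1 - Q.1, P.2 - Q.2)

/-- Determinant of two lattice vectors. -/
def det2 (u v : ℤ × ℤ) : ℤ := u.1 * v.2 - u.2 * v.1

/-- Dot product of two lattice vectors. -/
def dot2 (u v : ℤ × ℤ) : ℤ := u.1 * v.1 + u.2 * v.2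

/-- Squared Euclidean norm of a lattice vector. -/
def normSq2 (u : ℤ × ℤ) : ℤ := u.1 ^ 2 + u.2 ^ 2

/-- Membership in `𝒯(D)`: a non-degenerate lattice triangle with all three side
lengths at least `D` and all three angles at most `π/2` (for a non-degenerate
triangle, the angle at a vertex is at most `π/2` iff the dot product of the two
edge vectors emanating from that vertex is nonnegative). -/
def InT (D : ℝ) (P Q R : ℤ × ℤ) : Prop :=
  det2 (sub2 Q P) (sub2 R P) ≠ 0 ∧
  D ≤ Real.sqrt (normSq2 (sub2 Q P)) ∧
  D ≤ Real.sqrt (normSq2 (sub2 R Q)) ∧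
  D ≤ Real.sqrt (normSq2 (sub2 P R)) ∧
  0 ≤ dot2 (sub2 Q P) (sub2 R P) ∧
  0 ≤ dot2 (sub2 P Q) (sub2 R Q) ∧
  0 ≤ dot2 (sub2 P R) (sub2 Q R)

/-- Twice the area of a lattice triangle, `|det (Q - P, R - P)|`, a natural number. -/
def twiceArea (P Q R : ℤ × ℤ) : ℕ := (det2 (sub2 Q P) (sub2 R P)).natAbs

/-- `S D` is twice the minimal area of a triangle in `𝒯(D)`. -/
noncomputable def S (D : ℝ) : ℕ :=
  sInf {n : ℕ | ∃ P Q R : ℤ × ℤ, InT D P Q R ∧ n = twiceArea P Q R}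

set_option maxHeartbeats 1600000

namespace SAux

noncomputable def s3 : ℝ := Real.sqrt 3

lemma s3_nonneg : 0 ≤ s3 := Real.sqrt_nonneg 3
lemma s3_sq : s3 ^ 2 = 3 := Real.sq_sqrt (by norm_num)
lemma s3_gt : 173205/100000 < s3 := by nlinarith [s3_sq, s3_nonneg]
lemma s3_lt : s3 < 173206/100000 := by nlinarith [s3_sq, s3_nonneg]

def pp : ℕ → ℤ × ℤ
  | 0 => (1, 0)
  | (k+1) => (2 * (pp k).1 + 3 * (pp k).2, (pp k).1 + 2 * (pp k).2)

noncomputable def sp (k : ℕ) : ℝ := ((pp k).1 : ℝ) + s3 * ((pp k).2 : ℝ)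
noncomputable def sm (k : ℕ) : ℝ := ((pp k).1 : ℝ) - s3 * ((pp k).2 : ℝ)

lemma sp_zero : sp 0 = 1 := by simp [sp, pp]

lemma sp_succ (k : ℕ) : sp (k+1) = (2 + s3) * sp k := by
  simp only [sp, pp]; push_cast
  linear_combination (-((pp k).2 : ℝ)) * s3_sq

lemma sm_succ (k : ℕ) : sm (k+1) = (2 - s3) * sm k := by
  simp only [sm, pp]; push_cast
  linear_combination (-((pp k).2 : ℝ)) * s3_sq

lemma sp_ge (k : ℕ) : (k : ℝ) + 1 ≤ sp k := by
  induction k with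
  | zero => simp [sp_zero]
  | succ k ih =>
    have h := sp_succ k
    push_cast
    nlinarith [s3_nonneg]

lemma sp_pos (k : ℕ) : 0 < sp k := lt_of_lt_of_le (by positivity) (sp_ge k)

lemma pell_int (k : ℕ) : ((pp k).1)^2 - 3*((pp k).2)^2 = 1 := by
  induction k with
  | zero => simp [pp]
  | succ k ih => simp only [pp]; linear_combination ih

lemma sp_mul_sm (k : ℕ) : sp k * sm k = 1 := by
  have h : (((pp k).1 : ℝ))^2 - 3*(((pp k).2 : ℝ))^2 = 1 := by exact_mod_cast pell_int k
  simp only [sp, sm]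
  linear_combination h - (((pp k).2 : ℝ))^2 * s3_sq

lemma sm_pos (k : ℕ) : 0 < sm k := by
  have h := sp_mul_sm k
  have h2 := sp_pos k
  nlinarith

lemma sm_le (k : ℕ) (r : ℝ) (hr : 0 < r) (h : r < sp k) : sm k ≤ 1/r := by
  rw [le_div_iff₀ hr]
  nlinarith [sm_pos k, sp_mul_sm k]

lemma sm_mono (k n : ℕ) : sm (k+n) ≤ sm k := by
  induction n with
  | zero => exact le_refl _
  | succ n ih =>
    have h : sm (k + (n+1)) = (2 - s3) * sm (k+n) := sm_succ (k+n)
    have h2 := sm_pos (k+n)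
    nlinarith [s3_gt]


lemma greedy (k0 : ℕ) : ∀ (n : ℕ) (Y : ℝ), 0 ≤ Y → Y ≤ sp (k0 + n) →
    ∃ g : ℤ × ℤ, 0 ≤ (g.1:ℝ) - s3 * g.2 ∧ (g.1:ℝ) - s3 * g.2 ≤ 21/5 * (sm k0 - sm (k0+n)) ∧
      Y - sp k0 ≤ (g.1:ℝ) + s3 * g.2 ∧ (g.1:ℝ) + s3 * g.2 ≤ Y := by
  intro n
  induction n with
  | zero =>
    intro Y h0 h1
    refine ⟨(0,0), by norm_num, by norm_num, ?_, by norm_num; exact h0⟩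
    have : sp (k0 + 0) = sp k0 := by norm_num
    push_cast
    norm_num
    linarith [h1, this.le]
  | succ n ih =>
    intro Y h0 h1
    have hsp := sp_pos (k0+n)
    have hsm := sm_pos (k0+n)
    have hsmsucc : sm (k0 + (n+1)) = (2 - s3) * sm (k0+n) := sm_succ (k0+n)
    have hspsucc : sp (k0 + (n+1)) = (2 + s3) * sp (k0+n) := sp_succ (k0+n)
    by_cases hc : Y ≤ sp (k0+n)
    · obtain ⟨g, hg1, hg2, hg3, hg4⟩ := ih Y h0 hc
      refine ⟨g, hg1, ?_, hg3, hg4⟩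
      nlinarith [s3_gt]
    · push_neg at hc
      have hstep : ∀ j : ℕ, 1 ≤ j → j ≤ 3 → 0 ≤ Y - j * sp (k0+n) →
          Y - j * sp (k0+n) ≤ sp (k0+n) →
          ∃ g : ℤ × ℤ, 0 ≤ (g.1:ℝ) - s3 * g.2 ∧
            (g.1:ℝ) - s3 * g.2 ≤ 21/5 * (sm k0 - sm (k0+(n+1))) ∧
            Y - sp k0 ≤ (g.1:ℝ) + s3 * g.2 ∧ (g.1:ℝ) + s3 * g.2 ≤ Y := by
        intro j hj1 hj3 hl hu
        obtain ⟨g, hg1, hg2, hg3, hg4⟩ := ih (Y - j * sp (k0+n)) hl hu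
        refine ⟨(g.1 + (j:ℤ) * (pp (k0+n)).1, g.2 + (j:ℤ) * (pp (k0+n)).2), ?_, ?_, ?_, ?_⟩
        · have e1 : ((g.1 + (j:ℤ) * (pp (k0+n)).1 : ℤ):ℝ) - s3 * ((g.2 + (j:ℤ) * (pp (k0+n)).2 : ℤ):ℝ)
              = ((g.1:ℝ) - s3 * g.2) + (j:ℝ) * sm (k0+n) := by
            simp only [sm]; push_cast; ring
          rw [e1]
          have : (1:ℝ) ≤ (j:ℝ) := by exact_mod_cast hj1
          nlinarith
        · have e1 : ((g.1 + (j:ℤ) * (pp (k0+n)).1 : ℤ):ℝ) - s3 * ((g.2 + (j:ℤ) * (pp (k0+n)).2 : ℤ):ℝ)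
              = ((g.1:ℝ) - s3 * g.2) + (j:ℝ) * sm (k0+n) := by
            simp only [sm]; push_cast; ring
          rw [e1]
          have hj3' : (j:ℝ) ≤ 3 := by exact_mod_cast hj3
          nlinarith [s3_gt, sm_pos k0, hg2]
        · have e1 : ((g.1 + (j:ℤ) * (pp (k0+n)).1 : ℤ):ℝ) + s3 * ((g.2 + (j:ℤ) * (pp (k0+n)).2 : ℤ):ℝ)
              = ((g.1:ℝ) + s3 * g.2) + (j:ℝ) * sp (k0+n) := by
            simp only [sp]; push_cast; ring
          rw [e1]; linarith
        · have e1 : ((g.1 + (j:ℤ) * (pp (k0+n)).1 : ℤ):ℝ) + s3 * ((g.2 + (j:ℤ) * (pp (k0+n)).2 : ℤ):ℝ)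
              = ((g.1:ℝ) + s3 * g.2) + (j:ℝ) * sp (k0+n) := by
            simp only [sp]; push_cast; ring
          rw [e1]; linarith
      by_cases h2 : Y ≤ 2 * sp (k0+n)
      · exact hstep 1 le_rfl (by norm_num) (by push_cast; linarith) (by push_cast; linarith)
      · push_neg at h2
        by_cases h3 : Y ≤ 3 * sp (k0+n)
        · exact hstep 2 (by norm_num) (by norm_num) (by push_cast; linarith) (by push_cast; linarith)
        · push_neg at h3
          have hY4 : Y ≤ 4 * sp (k0+n) := by nlinarith [s3_lt]
          exact hstep 3 (by norm_num) le_rfl (by push_cast; linarith) (by push_cast; linarith)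


-- ARITHMETIC HELPERS (small contexts)

lemma chainA1 (r xs X s : ℝ) (hr : 100 ≤ r)
    (hxs2 : xs^2 = 3*r^10 + 150*r^4 - 9*r^6) (hxs0 : 0 ≤ xs)
    (hsr : r < s) (hs4 : s ≤ 4*r)
    (hX0 : xs - s ≤ X) (hX1 : X ≤ xs) :
    172/100*r^5 ≤ X ∧ X ≤ 174/100*r^5 ∧
    9*r^6 ≤ 3*r^10 + 150*r^4 - X^2 ∧ 3*r^10 + 150*r^4 - X^2 ≤ 23*r^6 := by
  have hr0 : (0:ℝ) < r := by linarith
  have hr2 : (10000:ℝ) ≤ r^2 := by nlinarith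
  have hr4 : (100000000:ℝ) ≤ r^4 := by nlinarith [sq_nonneg (r^2 - 10000)]
  have hr6 : (10^12:ℝ) ≤ r^6 := by nlinarith [sq_nonneg (r^2 - 10000), pow_pos hr0 2]
  have hr46 : r^4 * 10^12 ≤ r^10 := by nlinarith [pow_pos hr0 4]
  have hr64 : r^6 * 100000000 ≤ r^10 := by nlinarith [pow_pos hr0 6]
  have hr5r : 400 * r ≤ r^5 := by nlinarith [pow_pos hr0 1]
  have hxs_ub : xs ≤ 174/100 * r^5 := by nlinarith
  have hxs_lb : 173/100 * r^5 ≤ xs := by nlinarith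
  have hXl : 172/100*r^5 ≤ X := by nlinarith
  have hXu : X ≤ 174/100*r^5 := by linarith
  have hX_nn : 0 ≤ X := by nlinarith [pow_pos hr0 5]
  have hXsq_ub : X^2 ≤ xs^2 := by nlinarith
  have hXsq_lb : xs^2 - 8*r*xs ≤ X^2 := by nlinarith [sq_nonneg (xs - 4*r - X)]
  refine ⟨hXl, hXu, by nlinarith, by nlinarith⟩

lemma chainA2 (r ys Y s W : ℝ) (hr : 100 ≤ r)
    (hys2 : ys^2 = W) (hys0 : 0 ≤ ys)
    (hWl : 9*r^6 ≤ W) (hWu : W ≤ 23*r^6)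
    (hsr : r < s) (hs4 : s ≤ 4*r)
    (hY0 : ys - s ≤ Y) (hY1 : Y ≤ ys) :
    29/10*r^3 ≤ Y ∧ Y ≤ 48/10*r^3 ∧ W - 39*r^4 ≤ Y^2 ∧ Y^2 ≤ W := by
  have hr0 : (0:ℝ) < r := by linarith
  have hr2 : (10000:ℝ) ≤ r^2 := by nlinarith
  have hr3 : (1000000:ℝ) ≤ r^3 := by nlinarith
  have hr4 : r * 1000000 ≤ r^4 := by nlinarith
  have hys_lb : 3*r^3 ≤ ys := by nlinarith [pow_pos hr0 3]
  have hys_ub : ys ≤ 48/10*r^3 := by nlinarith [pow_pos hr0 3, pow_pos hr0 6]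
  have hYl : 29/10*r^3 ≤ Y := by nlinarith
  have hYu : Y ≤ 48/10*r^3 := by linarith
  have hY_nn : 0 ≤ Y := by nlinarith
  have hYsq_ub : Y^2 ≤ ys^2 := by nlinarith
  have hYsq_lb : ys^2 - 8*r*ys ≤ Y^2 := by nlinarith [sq_nonneg (ys - 4*r - Y)]
  refine ⟨hYl, hYu, by nlinarith, by nlinarith⟩

lemma chainA3 (r X Xb Y Yb : ℝ) (hr : 100 ≤ r)
    (hXl : 172/100*r^5 ≤ X) (hXu : X ≤ 174/100*r^5)
    (hYl : 29/10*r^3 ≤ Y) (hYu : Y ≤ 48/10*r^3)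
    (hXb0 : 0 ≤ Xb) (hXb1 : Xb * r ≤ 5) (hYb0 : 0 ≤ Yb) (hYb1 : Yb * r ≤ 5)
    (hSlo : 3*r^10 + 111*r^4 ≤ X^2 + Y^2)
    (hSup : X^2 + Y^2 ≤ 3*r^10 + 150*r^4) :
    3*r^10 + 93*r^4 ≤ (X-Xb)^2 + (Y-Yb)^2 ∧ (X-Xb)^2 + (Y-Yb)^2 ≤ 3*r^10 + 150*r^4 := by
  have hr0 : (0:ℝ) < r := by linarith
  have hr2 : (10000:ℝ) ≤ r^2 := by nlinarith
  have hX0 : 0 ≤ X := by nlinarith [pow_pos hr0 5]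
  have hY0 : 0 ≤ Y := by nlinarith [pow_pos hr0 3]
  have hXXb : X*Xb ≤ 87/10*r^4 := by
    have t1 : X*(Xb*r) ≤ X*5 := mul_le_mul_of_nonneg_left hXb1 hX0
    have t2 : X*5 ≤ 174/100*r^5*5 := by linarith
    nlinarith [mul_le_mul_of_nonneg_right hXu (mul_nonneg hXb0 hr0.le), pow_pos hr0 4]
  have hYYb : Y*Yb ≤ 24*r^2 := by
    nlinarith [mul_le_mul_of_nonneg_right hYu (mul_nonneg hYb0 hr0.le), pow_pos hr0 2]
  have hXXb0 : 0 ≤ X*Xb := mul_nonneg hX0 hXb0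
  have hYYb0 : 0 ≤ Y*Yb := mul_nonneg hY0 hYb0
  have hXbsq : Xb^2 ≤ 25 := by nlinarith
  have hYbsq : Yb^2 ≤ 25 := by nlinarith
  have hXbs : Xb ≤ 1 := by nlinarith
  have hYbs : Yb ≤ 1 := by nlinarith
  have h2X : 0 ≤ Xb*(2*X - Xb) := mul_nonneg hXb0 (by nlinarith [pow_pos hr0 5])
  have h2Y : 0 ≤ Yb*(2*Y - Yb) := mul_nonneg hYb0 (by nlinarith [pow_pos hr0 3])
  constructor
  · nlinarith
  · nlinarith

lemma chainB (r X Xb Y Yb e3 : ℝ) (hr : 100 ≤ r)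
    (h3 : e3^2 = 3) (h3l : 173205/100000 < e3) (h3u : e3 < 173206/100000)
    (hXl : 172/100*r^5 ≤ X) (hXu : X ≤ 174/100*r^5)
    (hYl : 29/10*r^3 ≤ Y) (hYu : Y ≤ 48/10*r^3)
    (hXb0 : 0 ≤ Xb) (hXb1 : Xb * r ≤ 5) (hYb0 : 0 ≤ Yb) (hYb1 : Yb * r ≤ 5)
    (hM3l : 3*r^10 + 93*r^4 ≤ (X-Xb)^2 + (Y-Yb)^2)
    (hM3u : (X-Xb)^2 + (Y-Yb)^2 ≤ 3*r^10 + 150*r^4)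
    (hSup : X^2 + Y^2 ≤ 3*r^10 + 150*r^4) :
    3*(r^5)^2 ≤ (X-Xb)^2 + (Y-Yb)^2 ∧
    12*(r^5)^2 ≤ ((X-Xb)^2+(Y-Yb)^2) + 3*((X+Xb)^2+(Y+Yb)^2) + 4*(e3*(Xb*Y)) - 4*(e3*(X*Yb)) ∧
    12*(r^5)^2 ≤ ((X-Xb)^2+(Y-Yb)^2) + 3*((X+Xb)^2+(Y+Yb)^2) + 4*(e3*(X*Yb)) - 4*(e3*(Xb*Y)) ∧
    0 ≤ e3*((X-Xb)^2+(Y-Yb)^2) + 6*(Xb*Y) - 6*(X*Yb) ∧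
    0 ≤ e3*((X-Xb)^2+(Y-Yb)^2) + 6*(X*Yb) - 6*(Xb*Y) ∧
    0 ≤ 3*(e3*((X+Xb)^2+(Y+Yb)^2)) - e3*((X-Xb)^2+(Y-Yb)^2) ∧
    0 < X^2 - Xb^2 + Y^2 - Yb^2 ∧
    X^2 - Xb^2 + Y^2 - Yb^2 ≤ 3*(r^5)^2 + 100*(e3*r^4) := by
  have hr0 : (0:ℝ) < r := by linarith
  have hr2 : (10000:ℝ) ≤ r^2 := by nlinarith
  have hr4 : (100000000:ℝ) ≤ r^4 := by nlinarith [sq_nonneg (r^2 - 10000)]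
  have hr24 : r^2 * 10000 ≤ r^4 := by nlinarith [pow_pos hr0 2]
  have hX0 : 0 ≤ X := by nlinarith [pow_pos hr0 5]
  have hY0 : 0 ≤ Y := by nlinarith [pow_pos hr0 3]
  have he30 : 0 < e3 := by linarith
  have hXYb : X*Yb ≤ 87/10*r^4 := by
    nlinarith [mul_le_mul_of_nonneg_right hXu (mul_nonneg hYb0 hr0.le), pow_pos hr0 4,
      mul_le_mul_of_nonneg_left hYb1 hX0]
  have hXbY : Xb*Y ≤ 24*r^2 := by
    nlinarith [mul_le_mul_of_nonneg_right hYu (mul_nonneg hXb0 hr0.le), pow_pos hr0 2,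
      mul_le_mul_of_nonneg_left hXb1 hY0]
  have hXYb0 : 0 ≤ X*Yb := mul_nonneg hX0 hYb0
  have hXbY0 : 0 ≤ Xb*Y := mul_nonneg hXb0 hY0
  have hs3XYb : e3*(X*Yb) ≤ 16*r^4 := by nlinarith [pow_pos hr0 4]
  have hs3XbY : e3*(Xb*Y) ≤ 44*r^2 := by nlinarith [pow_pos hr0 2]
  have hs3XYb0 : 0 ≤ e3*(X*Yb) := mul_nonneg he30.le hXYb0
  have hs3XbY0 : 0 ≤ e3*(Xb*Y) := mul_nonneg he30.le hXbY0
  have hXbsq : Xb^2 ≤ 25 := by nlinarith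
  have hYbsq : Yb^2 ≤ 25 := by nlinarith
  have hXXb0 : 0 ≤ X*Xb := mul_nonneg hX0 hXb0
  have hYYb0 : 0 ≤ Y*Yb := mul_nonneg hY0 hYb0
  have hplus : (X-Xb)^2 + (Y-Yb)^2 ≤ (X+Xb)^2 + (Y+Yb)^2 := by nlinarith
  have hr10 : (r^5)^2 = r^10 := by ring
  have hM30 : 0 ≤ (X-Xb)^2 + (Y-Yb)^2 := by positivity
  have he3M3 : e3*(3*r^10 + 93*r^4) ≤ e3*((X-Xb)^2+(Y-Yb)^2) :=
    mul_le_mul_of_nonneg_left hM3l he30.le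
  refine ⟨by nlinarith, by nlinarith, by nlinarith, ?_, ?_, ?_, ?_, ?_⟩
  · nlinarith [pow_pos hr0 10, pow_pos hr0 4]
  · nlinarith [pow_pos hr0 10, pow_pos hr0 4]
  · nlinarith [mul_le_mul_of_nonneg_left hplus he30.le]
  · nlinarith [pow_pos hr0 5, pow_pos hr0 3, pow_pos hr0 10]
  · nlinarith [pow_pos hr0 4]

lemma nonneg_of_smul (c x : ℝ) (hc : 0 < c) (h : 0 ≤ c * x) : 0 ≤ x := by nlinarith
lemma pos_of_smul (c x : ℝ) (hc : 0 < c) (h : 0 < c * x) : 0 < x := by nlinarith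
lemma le_of_smul (c x y : ℝ) (hc : 0 < c) (h : c*x ≤ c*y) : x ≤ y := le_of_mul_le_mul_left h hc
lemma s3_pos : (0:ℝ) < s3 := lt_trans (by norm_num) s3_gt

lemma budget (u v w r : ℝ) (h1 : u ≤ 21/5*(v - w)) (h2 : 0 < w) (h3 : v * r ≤ 1)
    (hr0 : 0 < r) : u * r ≤ 5 := by nlinarith

lemma le_sqrt_of_sq_le (D : ℝ) (hD : 0 ≤ D) (n : ℤ) (h : D^2 ≤ (n:ℝ)) :
    D ≤ Real.sqrt (n:ℝ) := by
  calc D = Real.sqrt (D^2) := (Real.sqrt_sq hD).symm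
  _ ≤ _ := Real.sqrt_le_sqrt h

lemma upper (r : ℝ) (hr : 100 ≤ r) :
    ∃ P Q R : ℤ × ℤ, InT (r^5) P Q R ∧
      ((twiceArea P Q R : ℕ) : ℝ) ≤ s3 / 2 * (r^5)^2 + 50 * r^4 := by
  classical
  have hr0 : (0:ℝ) < r := by linarith
  -- minimal k with r < sp k
  have hex : ∃ k, r < sp k := by
    obtain ⟨n, hn⟩ := exists_nat_gt r
    refine ⟨n, lt_of_lt_of_le hn ?_⟩
    have := sp_ge n
    linarith
  obtain ⟨k1, hk1, hk1min⟩ : ∃ k, r < sp k ∧ ∀ m, m < k → ¬ (r < sp m) :=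
    ⟨Nat.find hex, Nat.find_spec hex, fun m hm => Nat.find_min hex hm⟩
  cases k1 with
  | zero => rw [sp_zero] at hk1; linarith
  | succ k0 =>
  have hk0 : sp k0 ≤ r := le_of_not_gt (hk1min k0 (Nat.lt_succ_self k0))
  have hs_gt : r < sp (k0+1) := hk1
  have hs_le : sp (k0+1) ≤ 4*r := by
    rw [sp_succ]
    nlinarith [s3_lt, sp_pos k0]
  have hsm1r : sm (k0+1) * r ≤ 1 := by
    have h := sm_le (k0+1) r hr0 hs_gt
    calc sm (k0+1) * r ≤ (1/r) * r := mul_le_mul_of_nonneg_right h hr0.le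
    _ = 1 := by field_simp
  -- xs
  have hG9 : (0:ℝ) ≤ 3*r^10 + 150*r^4 - 9*r^6 := by nlinarith [sq_nonneg (r^2-10000), pow_pos hr0 6, pow_pos hr0 4, sq_nonneg (r^3 - r)]
  set xs : ℝ := Real.sqrt (3*r^10 + 150*r^4 - 9*r^6) with hxsdef
  have hxs2 : xs^2 = 3*r^10 + 150*r^4 - 9*r^6 := Real.sq_sqrt hG9
  have hxs0 : 0 ≤ xs := Real.sqrt_nonneg _
  -- greedy for X
  obtain ⟨n1, hn1⟩ := exists_nat_gt xs
  have hxtarget : xs ≤ sp (k0+1+n1) := by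
    have h := sp_ge (k0+1+n1)
    have h2 : (n1:ℝ) ≤ ((k0+1+n1 : ℕ):ℝ) := by
      push_cast
      linarith [Nat.cast_nonneg (α := ℝ) k0]
    linarith
  obtain ⟨gx, hXb0, hXb1, hX0, hX1⟩ := greedy (k0+1) n1 xs hxs0 hxtarget
  set X : ℝ := (gx.1:ℝ) + s3 * (gx.2:ℝ) with hXdef
  set Xb : ℝ := (gx.1:ℝ) - s3 * (gx.2:ℝ) with hXbdef
  have hXbr : Xb * r ≤ 5 := budget Xb (sm (k0+1)) (sm (k0+1+n1)) r hXb1 (sm_pos _) hsm1r hr0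
  obtain ⟨hXl, hXu, hWl, hWu⟩ := chainA1 r xs X (sp (k0+1)) hr hxs2 hxs0 hs_gt hs_le
    (by linarith) hX1
  -- ys
  have hG2X : (0:ℝ) ≤ 3*r^10 + 150*r^4 - X^2 := by
    have : (0:ℝ) ≤ 9*r^6 := by positivity
    linarith
  set ys : ℝ := Real.sqrt (3*r^10 + 150*r^4 - X^2) with hysdef
  have hys2 : ys^2 = 3*r^10 + 150*r^4 - X^2 := Real.sq_sqrt hG2X
  have hys0 : 0 ≤ ys := Real.sqrt_nonneg _
  -- greedy for Y
  obtain ⟨n2, hn2⟩ := exists_nat_gt ys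
  have hytarget : ys ≤ sp (k0+1+n2) := by
    have h := sp_ge (k0+1+n2)
    have h2 : (n2:ℝ) ≤ ((k0+1+n2 : ℕ):ℝ) := by
      push_cast
      linarith [Nat.cast_nonneg (α := ℝ) k0]
    linarith
  obtain ⟨gy, hYb0, hYb1, hY0, hY1⟩ := greedy (k0+1) n2 ys hys0 hytarget
  set Y : ℝ := (gy.1:ℝ) + s3 * (gy.2:ℝ) with hYdef
  set Yb : ℝ := (gy.1:ℝ) - s3 * (gy.2:ℝ) with hYbdef
  have hYbr : Yb * r ≤ 5 := budget Yb (sm (k0+1)) (sm (k0+1+n2)) r hYb1 (sm_pos _) hsm1r hr0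
  obtain ⟨hYl, hYu, hY2l, hY2u⟩ := chainA2 r ys Y (sp (k0+1)) (3*r^10 + 150*r^4 - X^2)
    hr hys2 hys0 hWl hWu hs_gt hs_le (by linarith) hY1
  have hSlo : 3*r^10 + 111*r^4 ≤ X^2 + Y^2 := by linarith
  have hSup : X^2 + Y^2 ≤ 3*r^10 + 150*r^4 := by linarith
  obtain ⟨hM3l, hM3u⟩ := chainA3 r X Xb Y Yb hr hXl hXu hYl hYu hXb0 hXbr hYb0 hYbr hSlo hSup
  obtain ⟨c1, c2, c3, c4, c5, c6, c7, c8⟩ := chainB r X Xb Y Yb s3 hr s3_sq s3_gt s3_lt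
    hXl hXu hYl hYu hXb0 hXbr hYb0 hYbr hM3l hM3u hSup
  -- identities
  have idU : 3 * ((normSq2 (sub2 (2*gx.2, 2*gy.2) ((0:ℤ),(0:ℤ))) : ℤ) : ℝ)
      = (X-Xb)^2 + (Y-Yb)^2 := by
    simp only [normSq2, sub2]
    push_cast
    rw [hXdef, hXbdef, hYdef, hYbdef]
    linear_combination (-4*((gx.2:ℝ)^2 + (gy.2:ℝ)^2)) * s3_sq
  have idW : 12 * ((normSq2 (sub2 (gx.2 - gy.1, gx.1 + gy.2) (2*gx.2, 2*gy.2)) : ℤ) : ℝ)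
      = ((X-Xb)^2+(Y-Yb)^2) + 3*((X+Xb)^2+(Y+Yb)^2) + 4*(s3*(X*Yb)) - 4*(s3*(Xb*Y)) := by
    simp only [normSq2, sub2]
    push_cast
    rw [hXdef, hXbdef, hYdef, hYbdef]
    linear_combination (-4*((gx.2:ℝ)^2 + (gy.2:ℝ)^2) + 8*((gx.1:ℝ)*(gy.2:ℝ) - (gx.2:ℝ)*(gy.1:ℝ))) * s3_sq
  have idV : 12 * ((normSq2 (sub2 ((0:ℤ),(0:ℤ)) (gx.2 - gy.1, gx.1 + gy.2)) : ℤ) : ℝ)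
      = ((X-Xb)^2+(Y-Yb)^2) + 3*((X+Xb)^2+(Y+Yb)^2) + 4*(s3*(Xb*Y)) - 4*(s3*(X*Yb)) := by
    simp only [normSq2, sub2]
    push_cast
    rw [hXdef, hXbdef, hYdef, hYbdef]
    linear_combination (-4*((gx.2:ℝ)^2 + (gy.2:ℝ)^2) - 8*((gx.1:ℝ)*(gy.2:ℝ) - (gx.2:ℝ)*(gy.1:ℝ))) * s3_sq
  have idD1 : 6 * (s3 * ((dot2 (sub2 (2*gx.2, 2*gy.2) ((0:ℤ),(0:ℤ))) (sub2 (gx.2 - gy.1, gx.1 + gy.2) ((0:ℤ),(0:ℤ))) : ℤ) : ℝ))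
      = s3*((X-Xb)^2+(Y-Yb)^2) + 6*(Xb*Y) - 6*(X*Yb) := by
    simp only [dot2, sub2]
    push_cast
    rw [hXdef, hXbdef, hYdef, hYbdef]
    linear_combination (-4*s3*((gx.2:ℝ)^2 + (gy.2:ℝ)^2)) * s3_sq
  have idD2 : 6 * (s3 * ((dot2 (sub2 ((0:ℤ),(0:ℤ)) (2*gx.2, 2*gy.2)) (sub2 (gx.2 - gy.1, gx.1 + gy.2) (2*gx.2, 2*gy.2)) : ℤ) : ℝ))
      = s3*((X-Xb)^2+(Y-Yb)^2) + 6*(X*Yb) - 6*(Xb*Y) := by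
    simp only [dot2, sub2]
    push_cast
    rw [hXdef, hXbdef, hYdef, hYbdef]
    linear_combination (-4*s3*((gx.2:ℝ)^2 + (gy.2:ℝ)^2)) * s3_sq
  have idD3 : 12 * (s3 * ((dot2 (sub2 ((0:ℤ),(0:ℤ)) (gx.2 - gy.1, gx.1 + gy.2)) (sub2 (2*gx.2, 2*gy.2) (gx.2 - gy.1, gx.1 + gy.2)) : ℤ) : ℝ))
      = 3*(s3*((X+Xb)^2+(Y+Yb)^2)) - s3*((X-Xb)^2+(Y-Yb)^2) := by
    simp only [dot2, sub2]
    push_cast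
    rw [hXdef, hXbdef, hYdef, hYbdef]
    linear_combination (4*s3*((gx.2:ℝ)^2 + (gy.2:ℝ)^2)) * s3_sq
  have idDET : 2 * (s3 * ((det2 (sub2 (2*gx.2, 2*gy.2) ((0:ℤ),(0:ℤ))) (sub2 (gx.2 - gy.1, gx.1 + gy.2) ((0:ℤ),(0:ℤ))) : ℤ) : ℝ))
      = X^2 - Xb^2 + Y^2 - Yb^2 := by
    simp only [det2, sub2]
    push_cast
    rw [hXdef, hXbdef, hYdef, hYbdef]
    ring
  have hddpos : (0:ℝ) < ((det2 (sub2 (2*gx.2, 2*gy.2) ((0:ℤ),(0:ℤ))) (sub2 (gx.2 - gy.1, gx.1 + gy.2) ((0:ℤ),(0:ℤ))) : ℤ) : ℝ) := by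
    apply pos_of_smul s3 _ s3_pos
    linarith only [idDET, c7]
  -- the triangle
  refine ⟨((0:ℤ),(0:ℤ)), (2*gx.2, 2*gy.2), (gx.2 - gy.1, gx.1 + gy.2), ⟨?_, ?_, ?_, ?_, ?_, ?_, ?_⟩, ?_⟩
  · have : (0:ℤ) < det2 (sub2 (2*gx.2, 2*gy.2) ((0:ℤ),(0:ℤ))) (sub2 (gx.2 - gy.1, gx.1 + gy.2) ((0:ℤ),(0:ℤ))) := by
      exact_mod_cast hddpos
    exact this.ne'
  · apply le_sqrt_of_sq_le _ (by positivity)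
    linarith only [idU, c1]
  · apply le_sqrt_of_sq_le _ (by positivity)
    linarith only [idW, c3]
  · apply le_sqrt_of_sq_le _ (by positivity)
    linarith only [idV, c2]
  · have h0 : (0:ℝ) ≤ ((dot2 (sub2 (2*gx.2, 2*gy.2) ((0:ℤ),(0:ℤ))) (sub2 (gx.2 - gy.1, gx.1 + gy.2) ((0:ℤ),(0:ℤ))) : ℤ) : ℝ) := by
      apply nonneg_of_smul s3 _ s3_pos
      linarith only [idD1, c4]
    exact_mod_cast h0
  · have h0 : (0:ℝ) ≤ ((dot2 (sub2 ((0:ℤ),(0:ℤ)) (2*gx.2, 2*gy.2)) (sub2 (gx.2 - gy.1, gx.1 + gy.2) (2*gx.2, 2*gy.2)) : ℤ) : ℝ) := by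
      apply nonneg_of_smul s3 _ s3_pos
      linarith only [idD2, c5]
    exact_mod_cast h0
  · have h0 : (0:ℝ) ≤ ((dot2 (sub2 ((0:ℤ),(0:ℤ)) (gx.2 - gy.1, gx.1 + gy.2)) (sub2 (2*gx.2, 2*gy.2) (gx.2 - gy.1, gx.1 + gy.2)) : ℤ) : ℝ) := by
      apply nonneg_of_smul s3 _ s3_pos
      linarith only [idD3, c6]
    exact_mod_cast h0
  · have e0 : twiceArea ((0:ℤ),(0:ℤ)) (2*gx.2, 2*gy.2) (gx.2 - gy.1, gx.1 + gy.2)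
        = (det2 (sub2 (2*gx.2, 2*gy.2) ((0:ℤ),(0:ℤ))) (sub2 (gx.2 - gy.1, gx.1 + gy.2) ((0:ℤ),(0:ℤ)))).natAbs := rfl
    rw [e0]
    rw [Nat.cast_natAbs]
    have hddposZ : (0:ℤ) < det2 (sub2 (2*gx.2, 2*gy.2) ((0:ℤ),(0:ℤ))) (sub2 (gx.2 - gy.1, gx.1 + gy.2) ((0:ℤ),(0:ℤ))) := by
      exact_mod_cast hddpos
    rw [abs_of_pos hddposZ]
    apply le_of_smul (2*s3) _ _ (by linarith only [s3_pos])
    have e : 2*s3*(s3/2*(r^5)^2 + 50*r^4) = 3*(r^5)^2 + 100*(s3*r^4) := by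
      linear_combination ((r^5)^2) * s3_sq
    calc 2*s3*((det2 (sub2 (2*gx.2, 2*gy.2) ((0:ℤ),(0:ℤ))) (sub2 (gx.2 - gy.1, gx.1 + gy.2) ((0:ℤ),(0:ℤ))) : ℤ) : ℝ)
        = X^2 - Xb^2 + Y^2 - Yb^2 := by linarith only [idDET]
    _ ≤ 3*(r^5)^2 + 100*(s3*r^4) := c8
    _ = 2*s3*(s3/2*(r^5)^2 + 50*r^4) := e.symm

lemma sq_from_sqrt (D : ℝ) (hD : 0 ≤ D) (n : ℤ) (hn : (0:ℝ) ≤ (n:ℝ)) (h : D ≤ Real.sqrt (n:ℝ)) :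
    D^2 ≤ (n:ℝ) := by
  have := Real.sq_sqrt hn
  nlinarith [Real.sqrt_nonneg ((n:ℝ)), pow_le_pow_left₀ hD h 2]

lemma lower_bound (D : ℝ) (hD : 0 ≤ D) (P Q R : ℤ × ℤ) (h : InT D P Q R) :
    Real.sqrt 3 / 2 * D^2 ≤ (twiceArea P Q R : ℝ) := by
  obtain ⟨hdet, h1, h2, h3, d1, d2, d3⟩ := h
  set e := sub2 Q P with he
  set f := sub2 R P with hf
  -- integer identities
  have i1 : dot2 (sub2 P Q) (sub2 R Q) = normSq2 e - dot2 e f := by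
    simp only [he, hf, dot2, normSq2, sub2]; ring
  have i2 : dot2 (sub2 P R) (sub2 Q R) = normSq2 f - dot2 e f := by
    simp only [he, hf, dot2, normSq2, sub2]; ring
  have i3 : normSq2 (sub2 R Q) = normSq2 e + normSq2 f - 2 * dot2 e f := by
    simp only [he, hf, dot2, normSq2, sub2]; ring
  have i4 : (det2 e f)^2 = normSq2 e * normSq2 f - (dot2 e f)^2 := by
    simp only [he, hf, det2, dot2, normSq2, sub2]; ring
  -- real versions
  have hm0 : (0:ℝ) ≤ (normSq2 e : ℝ) := by
    have : (0:ℤ) ≤ normSq2 e := by simp only [normSq2]; positivity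
    exact_mod_cast this
  have hn0 : (0:ℝ) ≤ (normSq2 f : ℝ) := by
    have : (0:ℤ) ≤ normSq2 f := by simp only [normSq2]; positivity
    exact_mod_cast this
  have hw0 : (0:ℝ) ≤ (normSq2 (sub2 R Q) : ℝ) := by
    have : (0:ℤ) ≤ normSq2 (sub2 R Q) := by simp only [normSq2]; positivity
    exact_mod_cast this
  have b1 : D^2 ≤ (normSq2 e : ℝ) := sq_from_sqrt D hD _ hm0 h1
  have b2 : D^2 ≤ (normSq2 (sub2 R Q) : ℝ) := sq_from_sqrt D hD _ hw0 h2
  have b3 : D^2 ≤ (normSq2 f : ℝ) := by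
    have hx : normSq2 (sub2 P R) = normSq2 f := by
      simp only [hf, normSq2, sub2]; ring
    have := sq_from_sqrt D hD (normSq2 (sub2 P R)) (by rw [hx]; exact hn0) h3
    rwa [hx] at this
  -- x,y,z
  set x : ℝ := (dot2 e f : ℝ) with hx
  set y : ℝ := (normSq2 e : ℝ) - x with hy
  set z : ℝ := (normSq2 f : ℝ) - x with hz
  have hx0 : 0 ≤ x := by rw [hx]; exact_mod_cast d1
  have hy0 : 0 ≤ y := by
    have : (0:ℝ) ≤ ((normSq2 e - dot2 e f : ℤ) : ℝ) := by
      rw [← i1]; exact_mod_cast d2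
    push_cast at this; simp only [hy, hx]; linarith
  have hz0 : 0 ≤ z := by
    have : (0:ℝ) ≤ ((normSq2 f - dot2 e f : ℤ) : ℝ) := by
      rw [← i2]; exact_mod_cast d3
    push_cast at this; simp only [hz, hx]; linarith
  have hyz : D^2 ≤ y + z := by
    have : (normSq2 (sub2 R Q) : ℝ) = y + z := by
      rw [i3]; push_cast; simp only [hy, hz, hx]; ring
    linarith [b2, this]
  have hxy : D^2 ≤ x + y := by simp only [hy]; linarith
  have hxz : D^2 ≤ x + z := by simp only [hz]; linarith
  -- det squared
  have hdet2 : ((det2 e f : ℝ))^2 = x*y + y*z + z*x := by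
    have hi4 : ((det2 e f : ℝ))^2 = (normSq2 e : ℝ) * (normSq2 f : ℝ) - x^2 := by
      rw [hx]; exact_mod_cast i4
    rw [hi4, hy, hz]; ring
  have hD2 : (0:ℝ) ≤ D^2 := sq_nonneg D
  have key : 3/4 * (D^2)^2 ≤ ((det2 e f : ℝ))^2 := by
    rw [hdet2]
    nlinarith [mul_nonneg hx0 (by linarith : (0:ℝ) ≤ y + z - D^2),
      mul_nonneg hy0 (by linarith : (0:ℝ) ≤ x + z - D^2),
      mul_nonneg hz0 (by linarith : (0:ℝ) ≤ x + y - D^2),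
      mul_nonneg hx0 hy0, mul_nonneg hy0 hz0, mul_nonneg hx0 hz0,
      sq_nonneg (x+y+z), mul_le_mul_of_nonneg_left hxy hD2]
  -- conclude
  have harea : (twiceArea P Q R : ℝ) = |((det2 e f : ℝ))| := by
    simp only [twiceArea, he, hf]
    push_cast [Nat.cast_natAbs]
    norm_num
  rw [harea]
  have h30 : (0:ℝ) ≤ 3 := by norm_num
  have hs3 : Real.sqrt 3 ^ 2 = 3 := Real.sq_sqrt h30
  have hgoal2 : (Real.sqrt 3 / 2 * D^2)^2 ≤ |((det2 e f : ℝ))|^2 := by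
    rw [sq_abs]
    calc (Real.sqrt 3 / 2 * D^2)^2 = 3/4 * (D^2)^2 := by rw [mul_pow, div_pow, hs3]; ring
    _ ≤ _ := key
  have hgn : 0 ≤ Real.sqrt 3 / 2 * D^2 := by positivity
  nlinarith [abs_nonneg ((det2 e f : ℝ)), hgoal2]


end SAux

/-- `S(D) = (√3/2)·D² + O(D^{4/5})` for large `D`. -/
theorem S_asymptotics :
    ∃ C > (0 : ℝ), ∃ D₀ > (0 : ℝ), ∀ D : ℝ, D₀ ≤ D →
      |(S D : ℝ) - Real.sqrt 3 / 2 * D ^ 2| ≤ C * D ^ ((4 : ℝ) / 5) := by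
  refine ⟨50, by norm_num, 10^10, by norm_num, fun D hD => ?_⟩
  have hD0 : (0:ℝ) < D := lt_of_lt_of_le (by norm_num) hD
  set r : ℝ := D ^ ((1:ℝ)/5) with hrdef
  have hr5 : r^(5:ℕ) = D := by
    rw [hrdef, ← Real.rpow_natCast (D ^ ((1:ℝ)/5)) 5, ← Real.rpow_mul hD0.le]
    norm_num
  have hr : (100:ℝ) ≤ r := by
    have h1 : ((10:ℝ)^10) ^ ((1:ℝ)/5) ≤ D ^ ((1:ℝ)/5) :=
      Real.rpow_le_rpow (by positivity) hD (by norm_num)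
    have h2 : ((10:ℝ)^10) ^ ((1:ℝ)/5) = 100 := by
      rw [show ((10:ℝ)^10) = ((100:ℝ))^(5:ℕ) by norm_num]
      rw [← Real.rpow_natCast (100:ℝ) 5, ← Real.rpow_mul (by norm_num : (0:ℝ) ≤ 100)]
      norm_num
    rw [hrdef]
    rw [h2] at h1
    exact h1
  have hr4 : D ^ ((4:ℝ)/5) = r^(4:ℕ) := by
    rw [hrdef, ← Real.rpow_natCast (D ^ ((1:ℝ)/5)) 4, ← Real.rpow_mul hD0.le]
    norm_num
  obtain ⟨P0, Q0, R0, hInT0, hA0⟩ := SAux.upper r hr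
  rw [hr5] at hInT0
  have hne : {n : ℕ | ∃ P Q R : ℤ × ℤ, InT D P Q R ∧ n = twiceArea P Q R}.Nonempty :=
    ⟨twiceArea P0 Q0 R0, ⟨P0, Q0, R0, hInT0, rfl⟩⟩
  have hmem : S D ∈ {n : ℕ | ∃ P Q R : ℤ × ℤ, InT D P Q R ∧ n = twiceArea P Q R} :=
    Nat.sInf_mem hne
  obtain ⟨P1, Q1, R1, hInT1, hEq1⟩ := hmem
  have hlow : Real.sqrt 3 / 2 * D^2 ≤ (S D : ℝ) := by
    have h0 := SAux.lower_bound D hD0.le P1 Q1 R1 hInT1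
    have h1 : ((S D : ℕ) : ℝ) = (twiceArea P1 Q1 R1 : ℝ) := by exact_mod_cast congrArg (fun n : ℕ => (n:ℝ)) hEq1
    rw [h1]
    exact h0
  have hup : (S D : ℝ) ≤ SAux.s3/2*(r^5)^2 + 50*r^4 := by
    have h1 : S D ≤ twiceArea P0 Q0 R0 := Nat.sInf_le ⟨P0, Q0, R0, hInT0, rfl⟩
    have h2 : ((S D : ℕ):ℝ) ≤ (twiceArea P0 Q0 R0 : ℝ) := by exact_mod_cast h1
    linarith [hA0]
  have hs3 : SAux.s3 = Real.sqrt 3 := rfl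
  rw [hs3] at hup
  have hD2 : D^2 = (r^5)^2 := by rw [hr5]
  have hr40 : (0:ℝ) ≤ r^4 := by positivity
  rw [hr4, abs_le]
  constructor
  · linarith
  · rw [hD2]
    linarith
end

section
/- If D ≥ 1 and sliding occurs for D, then S(D) > (√3/2)·D² + D/(2√3) − 1. -/
/-- An M-triangle: a triangle in `𝒯(D)` of minimal area. -/
def IsMTriangle (D : ℝ) (P Q R : ℤ × ℤ) : Prop :=
  InT D P Q R ∧ twiceArea P Q R = S D

/-- Sliding occurs for `D`: there are two M-triangles `OWA`, `OWB` with common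
side `OW`, `A ≠ B`, and `A`, `B` strictly on the same side of the line `OW`. -/
noncomputable def Sliding (D : ℝ) : Prop :=
  ∃ O W A B : ℤ × ℤ, IsMTriangle D O W A ∧ IsMTriangle D O W B ∧ A ≠ B ∧
    0 < det2 (sub2 W O) (sub2 A O) * det2 (sub2 W O) (sub2 B O)

/- ## auxiliary lemmas -/

lemma lagrange (w x : ℤ × ℤ) : dot2 w x ^ 2 + det2 w x ^ 2 = normSq2 w * normSq2 x := by
  simp only [dot2, det2, normSq2]; ring

lemma normSq2_nonneg (u : ℤ × ℤ) : 0 ≤ normSq2 u := by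
  simp only [normSq2]; positivity

lemma normSq2_neg (P Q : ℤ × ℤ) : normSq2 (sub2 P Q) = normSq2 (sub2 Q P) := by
  simp only [normSq2, sub2]; ring

lemma det2_shift (O W A : ℤ × ℤ) :
    det2 (sub2 W O) (sub2 A W) = det2 (sub2 W O) (sub2 A O) := by
  simp only [det2, sub2]; ring

lemma dot2_shift (O W A : ℤ × ℤ) :
    dot2 (sub2 W O) (sub2 A W) = dot2 (sub2 W O) (sub2 A O) - normSq2 (sub2 W O) := by
  simp only [dot2, normSq2, sub2]; ring

lemma dot2_conv1 (O W A : ℤ × ℤ) :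
    dot2 (sub2 O W) (sub2 A W) = normSq2 (sub2 W O) - dot2 (sub2 W O) (sub2 A O) := by
  simp only [dot2, normSq2, sub2]; ring

lemma dot2_conv2 (O W A : ℤ × ℤ) :
    dot2 (sub2 O A) (sub2 W A) = normSq2 (sub2 A O) - dot2 (sub2 W O) (sub2 A O) := by
  simp only [dot2, normSq2, sub2]; ring

lemma det2_diff (O W A B : ℤ × ℤ) :
    det2 (sub2 W O) (sub2 A B) = det2 (sub2 W O) (sub2 A O) - det2 (sub2 W O) (sub2 B O) := by
  simp only [det2, sub2]; ring

lemma dot2_diff (O W A B : ℤ × ℤ) :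
    dot2 (sub2 W O) (sub2 A B) = dot2 (sub2 W O) (sub2 A O) - dot2 (sub2 W O) (sub2 B O) := by
  simp only [dot2, sub2]; ring

lemma normSq2_one_le (A B : ℤ × ℤ) (h : A ≠ B) : 1 ≤ normSq2 (sub2 A B) := by
  by_contra hc
  push_neg at hc
  have h0 := normSq2_nonneg (sub2 A B)
  have he : normSq2 (sub2 A B) = 0 := by omega
  simp only [normSq2, sub2] at he
  have h1 : A.1 - B.1 = 0 := by nlinarith [sq_nonneg (A.1 - B.1), sq_nonneg (A.2 - B.2)]
  have h2 : A.2 - B.2 = 0 := by nlinarith [sq_nonneg (A.1 - B.1), sq_nonneg (A.2 - B.2)]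
  exact h (Prod.ext_iff.2 ⟨by omega, by omega⟩)

lemma sq_le_of_le_sqrt' (D : ℝ) (hD : 0 ≤ D) (X : ℤ) (hX : 0 ≤ X) (h : D ≤ Real.sqrt X) :
    D^2 ≤ (X:ℝ) := by
  have h0 : (0:ℝ) ≤ X := by exact_mod_cast hX
  calc D^2 = D*D := sq D
    _ ≤ Real.sqrt X * Real.sqrt X := mul_le_mul h h hD (Real.sqrt_nonneg _)
    _ = X := Real.mul_self_sqrt h0

lemma sqrt3_facts : (Real.sqrt 3)^2 = 3 ∧ 1.7 ≤ Real.sqrt 3 ∧ Real.sqrt 3 ≤ 1.8 := by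
  refine ⟨Real.sq_sqrt (by norm_num), ?_, ?_⟩
  · rw [show (1.7:ℝ) = Real.sqrt (1.7^2) by rw [Real.sqrt_sq]; norm_num]
    exact Real.sqrt_le_sqrt (by norm_num)
  · rw [show (1.8:ℝ) = Real.sqrt (1.8^2) by rw [Real.sqrt_sq]; norm_num]
    exact Real.sqrt_le_sqrt (by norm_num)

lemma final_comp (D σ : ℝ) (hD : 1 ≤ D) (hσ : 0 ≤ σ)
    (h : D^2*(3*D^2+2*D-1) ≤ 4*σ^2) :
    σ > Real.sqrt 3 / 2 * D ^ 2 + D / (2 * Real.sqrt 3) - 1 := by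
  obtain ⟨hr2, hr17, hr18⟩ := sqrt3_facts
  set r := Real.sqrt 3 with hr
  have hrpos : 0 < r := by linarith
  have hrinv : D / (2*r) = D * r / 6 := by
    field_simp; nlinarith
  rw [hrinv]
  nlinarith [sq_nonneg (r*D^2 + r*D/3 - 2), sq_nonneg (D-1), sq_nonneg σ, sq_nonneg (σ - (r/2*D^2 + D*r/6 - 1)), mul_nonneg hσ hσ, sq_nonneg (D*r - 2)]

lemma case1 (D σ : ℝ) (hD : 1 ≤ D) (h : D^2 ≤ σ) :
    σ > Real.sqrt 3 / 2 * D ^ 2 + D / (2 * Real.sqrt 3) - 1 := by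
  obtain ⟨hr2, hr17, hr18⟩ := sqrt3_facts
  set r := Real.sqrt 3 with hr
  have hrpos : 0 < r := by linarith
  have hrinv : D / (2*r) = D * r / 6 := by
    field_simp; nlinarith
  rw [hrinv]
  nlinarith [sq_nonneg (D - 3/2)]

lemma conclude (D σ : ℝ) (hD : 1 ≤ D) (hσ : 0 ≤ σ)
    (h : D^2 ≤ σ ∨ D^2*(3*D^2+2*D-1) ≤ 4*σ^2) :
    σ > Real.sqrt 3 / 2 * D ^ 2 + D / (2 * Real.sqrt 3) - 1 := by
  rcases h with h | h
  · exact case1 D σ hD h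
  · exact final_comp D σ hD hσ h

lemma claimP (D s : ℝ) (hD : 1 ≤ D) (hs : 0 ≤ s) (h1 : D ≤ 2*s+1) (h2 : 2*s^2+s ≤ D^2) :
    D^2*(3*D^2+2*D-1) ≤ 4*(2*s+1)^2*(D^2-s^2) := by
  nlinarith [mul_nonneg (sub_nonneg.2 h1) (sub_nonneg.2 h2), sq_nonneg (2*s+1-D), mul_nonneg hs (sub_nonneg.2 h2), mul_nonneg (mul_nonneg hs hs) (sub_nonneg.2 h1), sq_nonneg (D-1), mul_nonneg (sub_nonneg.2 h1) (sub_nonneg.2 h1)]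

set_option maxHeartbeats 1000000 in
lemma key (D n t t' σ mu mw : ℝ)
    (hD : 1 ≤ D) (hσ0 : 1 ≤ σ)
    (hn : D^2 ≤ n)
    (hmu : D^2 ≤ mu) (hmw : D^2 ≤ mw)
    (h1 : t^2 + σ^2 = n * mu)
    (h2 : (n - t')^2 + σ^2 = n * mw)
    (ht0 : 0 ≤ t) (ht'n : t' ≤ n)
    (hang : t * (n - t) ≤ σ^2)
    (hlt : t < t') (hsep : n ≤ (t' - t)^2) :
    D^2 ≤ σ ∨ D^2*(3*D^2+2*D-1) ≤ 4*σ^2 := by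
  have hD0 : (0:ℝ) < D := by linarith
  have hD2 : (1:ℝ) ≤ D^2 := by
    calc (1:ℝ) = 1^2 := by norm_num
      _ ≤ D^2 := pow_le_pow_left₀ (by norm_num) hD 2
  have hn0 : (0:ℝ) < n := by linarith
  by_cases hcase : n * D^2 ≤ σ^2
  · left
    have h3 : D^2*D^2 ≤ n*D^2 := mul_le_mul_of_nonneg_right hn (sq_nonneg D)
    have h4 : (D^2)^2 ≤ σ^2 := by
      have e : (D^2)^2 = D^2*D^2 := by ring
      linarith
    calc D^2 = Real.sqrt ((D^2)^2) := (Real.sqrt_sq (sq_nonneg D)).symm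
      _ ≤ Real.sqrt (σ^2) := Real.sqrt_le_sqrt h4
      _ = σ := Real.sqrt_sq (by linarith)
  · right
    push_neg at hcase
    set q := Real.sqrt (n * D^2 - σ^2) with hq
    have hqsq : q^2 = n * D^2 - σ^2 := Real.sq_sqrt (by linarith)
    have hq0 : 0 ≤ q := Real.sqrt_nonneg _
    set ρ := Real.sqrt n with hρ
    have hρsq : ρ^2 = n := Real.sq_sqrt (by linarith)
    have hρ0 : 0 ≤ ρ := Real.sqrt_nonneg _
    have hρD : D ≤ ρ := by
      calc D = Real.sqrt (D^2) := (Real.sqrt_sq hD0.le).symm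
        _ ≤ ρ := Real.sqrt_le_sqrt hn
    have hρpos : 0 < ρ := by linarith
    have htq : q ≤ t := by
      have h5 : n*D^2 ≤ n*mu := mul_le_mul_of_nonneg_left hmu hn0.le
      calc q = Real.sqrt (n*D^2 - σ^2) := hq
        _ ≤ Real.sqrt (t^2) := Real.sqrt_le_sqrt (by linarith)
        _ = t := Real.sqrt_sq ht0
    have ht'q : q ≤ n - t' := by
      have h5 : n*D^2 ≤ n*mw := mul_le_mul_of_nonneg_left hmw hn0.le
      calc q = Real.sqrt (n*D^2 - σ^2) := hq
        _ ≤ Real.sqrt ((n-t')^2) := Real.sqrt_le_sqrt (by linarith)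
        _ = n - t' := Real.sqrt_sq (by linarith)
    have hsep' : ρ ≤ t' - t := by
      calc ρ = Real.sqrt n := hρ
        _ ≤ Real.sqrt ((t'-t)^2) := Real.sqrt_le_sqrt hsep
        _ = t' - t := Real.sqrt_sq (by linarith)
    have hL : 2*q + ρ ≤ n := by linarith
    have hprod : q * (ρ + q) ≤ t * (n - t) :=
      mul_le_mul htq (by linarith) (by linarith) ht0
    have hangle : n * D^2 ≤ 2 * σ^2 - q * ρ := by
      have e1 : q * (ρ + q) = q*ρ + q^2 := by ring
      linarith
    set s := q / ρ with hs
    have hs0 : 0 ≤ s := div_nonneg hq0 hρ0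
    have hqs : q = s * ρ := (div_mul_cancel₀ q hρpos.ne').symm
    have hnρ : n = ρ * ρ := by rw [← hρsq]; ring
    have hρs : 2*s + 1 ≤ ρ := by
      have e : (2*s+1)*ρ ≤ ρ*ρ := by
        have e1 : (2*s+1)*ρ = 2*(s*ρ) + ρ := by ring
        rw [e1, ← hqs, ← hnρ]; exact hL
      exact le_of_mul_le_mul_right e hρpos
    have hσ2 : σ^2 = ρ*ρ*D^2 - s^2*(ρ*ρ) := by
      have e1 : q^2 = s^2*(ρ*ρ) := by rw [hqs]; ring
      have e2 : n*D^2 = ρ*ρ*D^2 := by rw [← hnρ]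
      linarith
    have hDs : 2*s^2 + s ≤ D^2 := by
      have e : (2*s^2+s)*(ρ*ρ) ≤ D^2*(ρ*ρ) := by
        have e1 : q*ρ = s*(ρ*ρ) := by rw [hqs]; ring
        have e2 : n*D^2 = D^2*(ρ*ρ) := by rw [hnρ]; ring
        have e3 : (2*s^2+s)*(ρ*ρ) = 2*(s^2*(ρ*ρ)) + s*(ρ*ρ) := by ring
        linarith
      exact le_of_mul_le_mul_right e (mul_pos hρpos hρpos)
    have hD2s : 0 ≤ D^2 - s^2 := by
      have := sq_nonneg s
      linarith
    by_cases hsub : D ≤ 2*s + 1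
    · have hP := claimP D s hD hs0 hsub hDs
      have h9 : (2*s+1)*(2*s+1) ≤ ρ*ρ := mul_le_mul hρs hρs (by linarith) hρ0
      have h10 : (2*s+1)*(2*s+1)*(D^2-s^2) ≤ ρ*ρ*(D^2-s^2) :=
        mul_le_mul_of_nonneg_right h9 hD2s
      have e : ρ*ρ*(D^2-s^2) = σ^2 := by rw [hσ2]; ring
      have e2 : (2*s+1)*(2*s+1)*(D^2-s^2) = (2*s+1)^2*(D^2-s^2) := by ring
      linarith
    · push_neg at hsub
      have hsD : 2*s ≤ D - 1 := by linarith
      have h4s : (2*s)*(2*s) ≤ (D-1)*(D-1) :=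
        mul_le_mul hsD hsD (by linarith) (by linarith)
      have hD2s' : (3*D^2 + 2*D - 1)/4 ≤ D^2 - s^2 := by
        have e : (2*s)*(2*s) = 4*s^2 := by ring
        have e2 : (D-1)*(D-1) = D^2 - 2*D + 1 := by ring
        linarith
      have h8 : D^2 ≤ ρ^2 := by rw [hρsq]; exact hn
      have h10 : D^2 * ((3*D^2+2*D-1)/4) ≤ ρ^2*(D^2-s^2) :=
        mul_le_mul h8 hD2s' (by linarith) (sq_nonneg ρ)
      have e : ρ^2*(D^2-s^2) = σ^2 := by rw [hσ2]; ring
      linarith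


set_option maxHeartbeats 1000000 in
/-- If `D ≥ 1` and sliding occurs for `D`, then
`S(D) > (√3/2)·D² + D/(2√3) − 1`. -/
theorem sliding_lower_bound (D : ℝ) (hD : 1 ≤ D) (h : Sliding D) :
    (S D : ℝ) > Real.sqrt 3 / 2 * D ^ 2 + D / (2 * Real.sqrt 3) - 1 := by
  obtain ⟨O, W, A, B, ⟨hTA, hSA⟩, ⟨hTB, hSB⟩, hAB, hsign⟩ := h
  obtain ⟨hdA, hOW, hWA, hAO, hdot1A, hdot2A, hdot3A⟩ := hTA
  obtain ⟨hdB, _, hWB, hBO, hdot1B, hdot2B, hdot3B⟩ := hTB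
  set d : ℤ := det2 (sub2 W O) (sub2 A O) with hd
  set e : ℤ := det2 (sub2 W O) (sub2 B O) with he
  set n : ℤ := normSq2 (sub2 W O) with hn
  set t : ℤ := dot2 (sub2 W O) (sub2 A O) with ht
  set t' : ℤ := dot2 (sub2 W O) (sub2 B O) with ht'
  set mu : ℤ := normSq2 (sub2 A O) with hmu
  set mv : ℤ := normSq2 (sub2 B O) with hmv
  set mwA : ℤ := normSq2 (sub2 A W) with hmwA
  set mwB : ℤ := normSq2 (sub2 B W) with hmwB
  have hdnat : d.natAbs = S D := by rw [← hSA]; rfl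
  have henat : e.natAbs = S D := by rw [← hSB]; rfl
  have hde : d = e := by
    rcases Int.natAbs_eq_natAbs_iff.mp (hdnat.trans henat.symm) with h1 | h1
    · exact h1
    · exfalso
      have h2 : d * e = -(e*e) := by rw [h1]; ring
      nlinarith [mul_self_nonneg e]
  have LA1 : t^2 + d^2 = n * mu := by rw [ht, hd, hn, hmu]; exact lagrange _ _
  have LA2 : (t - n)^2 + d^2 = n * mwA := by
    have h0 := lagrange (sub2 W O) (sub2 A W)
    rw [det2_shift, dot2_shift] at h0
    rw [ht, hd, hn, hmwA]; exact h0
  have LB1 : t'^2 + e^2 = n * mv := by rw [ht', he, hn, hmv]; exact lagrange _ _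
  have LB2 : (t' - n)^2 + e^2 = n * mwB := by
    have h0 := lagrange (sub2 W O) (sub2 B W)
    rw [det2_shift, dot2_shift] at h0
    rw [ht', he, hn, hmwB]; exact h0
  have Lsep : (t - t')^2 = n * normSq2 (sub2 A B) := by
    have h0 := lagrange (sub2 W O) (sub2 A B)
    rw [det2_diff, dot2_diff] at h0
    rw [← hd, ← he, ← ht, ← ht', ← hn] at h0
    rw [hde] at h0
    linarith [h0]
  have htn : t ≤ n := by
    have h0 := dot2_conv1 O W A
    rw [← hn, ← ht] at h0
    linarith [hdot2A, h0]
  have ht'n : t' ≤ n := by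
    have h0 := dot2_conv1 O W B
    rw [← hn, ← ht'] at h0
    linarith [hdot2B, h0]
  have htmu : t ≤ mu := by
    have h0 := dot2_conv2 O W A
    rw [← hmu, ← ht] at h0
    linarith [hdot3A, h0]
  have ht'mv : t' ≤ mv := by
    have h0 := dot2_conv2 O W B
    rw [← hmv, ← ht'] at h0
    linarith [hdot3B, h0]
  have hd2 : (1:ℤ) ≤ d^2 := by
    rcases lt_trichotomy d 0 with h1 | h1 | h1
    · nlinarith
    · exact absurd h1 hdA
    · nlinarith
  have hmu0 : (0:ℤ) ≤ mu := by rw [hmu]; exact normSq2_nonneg _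
  have hn0 : (0:ℤ) ≤ n := by rw [hn]; exact normSq2_nonneg _
  have hn1 : (1:ℤ) ≤ n := by
    rcases lt_or_eq_of_le hn0 with h1 | h1
    · omega
    · exfalso
      have h2 : n * mu = 0 := by rw [← h1]; ring
      nlinarith [sq_nonneg t]
  have hABs : (1:ℤ) ≤ normSq2 (sub2 A B) := normSq2_one_le A B hAB
  -- real versions
  set σ : ℝ := (S D : ℝ) with hσ
  have hσd : σ^2 = ((d:ℝ))^2 := by
    rw [hσ, ← hdnat]
    push_cast [Nat.cast_natAbs]
    rw [sq_abs]
  have hσ1 : (1:ℝ) ≤ σ := by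
    rw [hσ, ← hdnat]
    exact_mod_cast Nat.one_le_iff_ne_zero.2 (Int.natAbs_ne_zero.2 hdA)
  have hD0 : (0:ℝ) ≤ D := by linarith
  have RN : D^2 ≤ (n:ℝ) := sq_le_of_le_sqrt' D hD0 n hn0 hOW
  have RMU : D^2 ≤ (mu:ℝ) := by
    have h0 := sq_le_of_le_sqrt' D hD0 (normSq2 (sub2 O A)) (normSq2_nonneg _) hAO
    rwa [normSq2_neg, ← hmu] at h0
  have RMV : D^2 ≤ (mv:ℝ) := by
    have h0 := sq_le_of_le_sqrt' D hD0 (normSq2 (sub2 O B)) (normSq2_nonneg _) hBO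
    rwa [normSq2_neg, ← hmv] at h0
  have RMWA : D^2 ≤ (mwA:ℝ) := sq_le_of_le_sqrt' D hD0 mwA (by rw [hmwA]; exact normSq2_nonneg _) hWA
  have RMWB : D^2 ≤ (mwB:ℝ) := sq_le_of_le_sqrt' D hD0 mwB (by rw [hmwB]; exact normSq2_nonneg _) hWB
  have RL1 : (t:ℝ)^2 + σ^2 = (n:ℝ) * (mu:ℝ) := by
    rw [hσd]; exact_mod_cast LA1
  have RL2 : ((n:ℝ) - (t':ℝ))^2 + σ^2 = (n:ℝ) * (mwB:ℝ) := by
    rw [hσd, hde]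
    have h0 : ((t':ℝ) - (n:ℝ))^2 + ((e:ℝ))^2 = (n:ℝ) * (mwB:ℝ) := by exact_mod_cast LB2
    linarith [h0]
  have RL1' : (t':ℝ)^2 + σ^2 = (n:ℝ) * (mv:ℝ) := by
    rw [hσd, hde]; exact_mod_cast LB1
  have RL2' : ((n:ℝ) - (t:ℝ))^2 + σ^2 = (n:ℝ) * (mwA:ℝ) := by
    rw [hσd]
    have h0 : ((t:ℝ) - (n:ℝ))^2 + ((d:ℝ))^2 = (n:ℝ) * (mwA:ℝ) := by exact_mod_cast LA2
    linarith [h0]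
  have RT0 : (0:ℝ) ≤ (t:ℝ) := by exact_mod_cast hdot1A
  have RT'0 : (0:ℝ) ≤ (t':ℝ) := by exact_mod_cast hdot1B
  have RTN : (t:ℝ) ≤ (n:ℝ) := by exact_mod_cast htn
  have RT'N : (t':ℝ) ≤ (n:ℝ) := by exact_mod_cast ht'n
  have RN0 : (0:ℝ) < (n:ℝ) := by exact_mod_cast hn1
  have angA : (t:ℝ) * ((n:ℝ) - (t:ℝ)) ≤ σ^2 := by
    have h1 : (n:ℝ) * (t:ℝ) ≤ (n:ℝ) * (mu:ℝ) :=
      mul_le_mul_of_nonneg_left (by exact_mod_cast htmu) RN0.le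
    nlinarith [RL1]
  have angB : (t':ℝ) * ((n:ℝ) - (t':ℝ)) ≤ σ^2 := by
    have h1 : (n:ℝ) * (t':ℝ) ≤ (n:ℝ) * (mv:ℝ) :=
      mul_le_mul_of_nonneg_left (by exact_mod_cast ht'mv) RN0.le
    nlinarith [RL1']
  have Rsep : (n:ℝ) ≤ ((t:ℝ) - (t':ℝ))^2 := by
    have h1 : n * 1 ≤ n * normSq2 (sub2 A B) :=
      mul_le_mul_of_nonneg_left hABs hn0
    have h2 : n ≤ (t - t')^2 := by rw [Lsep]; linarith [h1]
    exact_mod_cast h2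
  rcases lt_trichotomy (t:ℝ) (t':ℝ) with hlt | heq | hgt
  · have hk := key D (n:ℝ) (t:ℝ) (t':ℝ) σ (mu:ℝ) (mwB:ℝ) hD hσ1 RN RMU RMWB RL1 RL2
      RT0 RT'N angA hlt (by linarith [Rsep])
    exact conclude D σ hD (by linarith) hk
  · exfalso
    rw [heq] at Rsep
    simp at Rsep
    linarith [RN0, Rsep]
  · have hk := key D (n:ℝ) (t':ℝ) (t:ℝ) σ (mv:ℝ) (mwA:ℝ) hD hσ1 RN RMV RMWA RL1' RL2'
      RT'0 RTN angB hgt (by linarith [Rsep])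
    exact conclude D σ hD (by linarith) hk
end

section
/- Let D ≥ 10 be real and 0 < ε < 1/2. Suppose there exist integers x and y such that ‖√3·x‖ < ε, ‖√3·y‖ < ε, and D + √2·ε ≤ 2√(x² + y²) ≤ D + 2ε. Then S(D) < (√3/2)·D² + (2√3 + √2)·D·ε + 7ε². -/
/-- Distance from a real number to the nearest integer. -/
noncomputable def distNearestInt (x : ℝ) : ℝ := |x - round x|

lemma neg_le_of_sq_le_sq' (t K : ℝ) (h0 : 0 < K) (h : t^2 ≤ K^2) : -K ≤ t := by
  nlinarith [sq_nonneg (t + K)]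

lemma le_of_sq_le_sq' (t K : ℝ) (h0 : 0 < K) (h : t^2 ≤ K^2) : t ≤ K := by
  nlinarith [sq_nonneg (t - K)]

lemma cauchy2 (p q c d : ℝ) : (p*c + q*d)^2 ≤ (p^2+q^2)*(c^2+d^2) := by
  nlinarith [sq_nonneg (p*d - q*c)]

lemma sq_lt_of_abs_lt (d e : ℝ) (h : |d| < e) : d^2 < e^2 := by
  nlinarith [abs_nonneg d, sq_abs d]

lemma eps_sq_lt (ε : ℝ) (h0 : 0 < ε) (h : ε < 1/2) : ε^2 < 1/4 := by nlinarith

lemma half_sq (r : ℝ) (h : 5 ≤ r) : r^2*(1/2) ≤ (r^2/2)^2 := by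
  have h25 : 25 ≤ r^2 := by
    rw [pow_two]
    calc (25:ℝ) = 5*5 := by norm_num
    _ ≤ r*r := mul_le_mul h h (by norm_num) (by linarith)
  nlinarith [h25, sq_nonneg (r^2 - 25)]

lemma sqrt_le_of_sq (c : ℝ) (hc : 0 ≤ c) (a : ℝ) (h : a ≤ c^2) : Real.sqrt a ≤ c := by
  calc Real.sqrt a ≤ Real.sqrt (c^2) := Real.sqrt_le_sqrt h
  _ = c := Real.sqrt_sq hc

lemma side_aux (D ε r u v da db : ℝ) (hr5 : 5 ≤ r) (hε0 : 0 < ε)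
    (hε : ε < 1/2) (hD0 : 0 ≤ D) (huv : u^2 + v^2 = 4*r^2)
    (hda : |da| < ε) (hdb : |db| < ε)
    (hlo : D + Real.sqrt 2 * ε ≤ 2*r) :
    D^2 ≤ (u+db)^2 + (v-da)^2 := by
  obtain ⟨s2, hs2def⟩ : ∃ s, s = Real.sqrt 2 := ⟨_, rfl⟩
  rw [← hs2def] at hlo
  have hr0 : (0:ℝ) < r := by linarith
  have hs2sq : s2^2 = 2 := by rw [hs2def]; exact Real.sq_sqrt (by norm_num)
  have hs2pos : (0:ℝ) < s2 := by rw [hs2def]; exact Real.sqrt_pos.2 (by norm_num)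
  have hs2ge : 1 ≤ s2 := by nlinarith
  have hs2le : s2 ≤ 2 := by nlinarith
  have hda2 : da^2 < ε^2 := by nlinarith [abs_nonneg da, sq_abs da]
  have hdb2 : db^2 < ε^2 := by nlinarith [abs_nonneg db, sq_abs db]
  obtain ⟨t, ht⟩ : ∃ t, t = u*db - v*da := ⟨_, rfl⟩
  have ht2 : t^2 ≤ (u^2+v^2)*(da^2+db^2) := by
    rw [ht]; nlinarith [sq_nonneg (u*da + v*db)]
  rw [huv] at ht2
  obtain ⟨K, hK⟩ : ∃ K, K = 2*s2*r*ε - ε^2 + (da^2+db^2)/2 := ⟨_, rfl⟩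
  have hrε : 5*ε ≤ r*ε := mul_le_mul_of_nonneg_right hr5 hε0.le
  have hrε2 : r*ε < r*(1/2) := mul_lt_mul_of_pos_left hε hr0
  have hεε : ε*ε < ε*(1/2) := mul_lt_mul_of_pos_left hε hε0
  have hs2rε : s2*(r*ε) ≤ 2*(r*ε) := mul_le_mul_of_nonneg_right hs2le (mul_pos hr0 hε0).le
  have hs2rε1 : 1*(r*ε) ≤ s2*(r*ε) := mul_le_mul_of_nonneg_right hs2ge (mul_pos hr0 hε0).le
  have hrr : 5*r ≤ r*r := mul_le_mul_of_nonneg_right hr5 hr0.le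
  have hK0 : 0 < K := by
    rw [hK]; linarith [sq_nonneg da, sq_nonneg db]
  have hd0 : 0 ≤ ε^2 - (da^2+db^2)/2 := by linarith
  have hbig : 0 ≤ 8*r^2 - 4*(s2*(r*ε)) + (ε^2 - (da^2+db^2)/2) := by
    nlinarith
  have hprod := mul_nonneg hd0 hbig
  have hm : (2*s2*r*ε)^2 = 8*r^2*ε^2 := by
    have h' : (2*s2*r*ε)^2 = s2^2*(4*r^2*ε^2) := by ring
    rw [h', hs2sq]; ring
  have expand : K^2 = 4*r^2*(da^2+db^2)
      + (ε^2-(da^2+db^2)/2)*(8*r^2 - 4*(s2*(r*ε)) + (ε^2-(da^2+db^2)/2))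
      + ((2*s2*r*ε)^2 - 8*r^2*ε^2) := by rw [hK]; ring
  have hK2 : t^2 ≤ K^2 := by rw [expand]; linarith
  have htK : -K ≤ t := neg_le_of_sq_le_sq' t K hK0 hK2
  have hD2 : D ≤ 2*r - s2*ε := by linarith
  have hsq : D^2 ≤ (2*r - s2*ε)^2 := by
    rw [pow_two, pow_two]; exact mul_self_le_mul_self hD0 hD2
  have hm2 : (s2*ε)^2 = 2*ε^2 := by
    have h' : (s2*ε)^2 = s2^2*ε^2 := by ring
    rw [h', hs2sq]
  have expand3 : (2*r - s2*ε)^2 = 4*r^2 - 4*(s2*(r*ε)) + (s2*ε)^2 := by ring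
  rw [expand3, hm2] at hsq
  have expand2 : (u+db)^2+(v-da)^2 = (u^2+v^2) + 2*(u*db - v*da) + (da^2+db^2) := by
    ring
  rw [expand2, huv, ← ht]
  rw [hK] at htK
  linarith

set_option maxHeartbeats 2000000 in
/-- Reduction lemma: good simultaneous approximations of `√3` give an upper
bound on `S(D)`. -/
theorem S_bound_of_approx (D ε : ℝ) (hD : 10 ≤ D) (hε0 : 0 < ε) (hε : ε < 1 / 2)
    (h : ∃ x y : ℤ,
      distNearestInt (Real.sqrt 3 * x) < ε ∧
      distNearestInt (Real.sqrt 3 * y) < ε ∧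
      D + Real.sqrt 2 * ε ≤ 2 * Real.sqrt ((x : ℝ) ^ 2 + (y : ℝ) ^ 2) ∧
      2 * Real.sqrt ((x : ℝ) ^ 2 + (y : ℝ) ^ 2) ≤ D + 2 * ε) :
    (S D : ℝ) < Real.sqrt 3 / 2 * D ^ 2 + (2 * Real.sqrt 3 + Real.sqrt 2) * D * ε
      + 7 * ε ^ 2 := by
  obtain ⟨x, y, hx, hy, hlo, hhi⟩ := h
  rw [distNearestInt] at hx hy
  obtain ⟨a, hadef⟩ : ∃ a : ℤ, a = round (Real.sqrt 3 * (x:ℝ)) := ⟨_, rfl⟩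
  obtain ⟨b, hbdef⟩ : ∃ b : ℤ, b = round (Real.sqrt 3 * (y:ℝ)) := ⟨_, rfl⟩
  rw [← hadef] at hx
  rw [← hbdef] at hy
  obtain ⟨s3, hs3def⟩ : ∃ s, s = Real.sqrt 3 := ⟨_, rfl⟩
  obtain ⟨s2, hs2def⟩ : ∃ s, s = Real.sqrt 2 := ⟨_, rfl⟩
  obtain ⟨r, hrdef⟩ : ∃ s, s = Real.sqrt ((x : ℝ) ^ 2 + (y : ℝ) ^ 2) := ⟨_, rfl⟩
  rw [← hs2def, ← hrdef] at hlo
  rw [← hrdef] at hhi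
  rw [← hs3def] at hx hy
  have hs3sq : s3^2 = 3 := by rw [hs3def]; exact Real.sq_sqrt (by norm_num)
  have hs2sq : s2^2 = 2 := by rw [hs2def]; exact Real.sq_sqrt (by norm_num)
  have hs3pos : (0:ℝ) < s3 := by rw [hs3def]; exact Real.sqrt_pos.2 (by norm_num)
  have hs2pos : (0:ℝ) < s2 := by rw [hs2def]; exact Real.sqrt_pos.2 (by norm_num)
  have hs3ge : 1 ≤ s3 := by
    rw [hs3def]
    have h1 : Real.sqrt 1 ≤ Real.sqrt 3 := Real.sqrt_le_sqrt (by norm_num)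
    rwa [Real.sqrt_one] at h1
  have hs3le' : s3 ≤ 9/5 := by
    rw [hs3def]; exact sqrt_le_of_sq (9/5) (by norm_num) 3 (by norm_num)
  have hs3le : s3 ≤ 2 := by linarith
  have hs2le' : s2 ≤ 3/2 := by
    rw [hs2def]; exact sqrt_le_of_sq (3/2) (by norm_num) 2 (by norm_num)
  have hr2 : r^2 = (x:ℝ)^2 + (y:ℝ)^2 := by rw [hrdef]; exact Real.sq_sqrt (by positivity)
  have hr0 : (0:ℝ) ≤ r := by rw [hrdef]; positivity
  have hr5 : 5 ≤ r := by linarith [mul_pos hs2pos hε0]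
  have hr25 : 25 ≤ r^2 := by
    rw [pow_two]
    calc (25:ℝ) = 5*5 := by norm_num
    _ ≤ r*r := mul_le_mul hr5 hr5 (by norm_num) (by linarith)
  have hεq : ε^2 < 1/4 := eps_sq_lt ε hε0 hε
  have hD0 : (0:ℝ) ≤ D := by linarith
  -- error terms
  obtain ⟨da, hdadef⟩ : ∃ d, d = s3*(x:ℝ) - (a:ℝ) := ⟨_, rfl⟩
  obtain ⟨db, hdbdef⟩ : ∃ d, d = s3*(y:ℝ) - (b:ℝ) := ⟨_, rfl⟩
  have hda : |da| < ε := by rw [hdadef]; exact hx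
  have hdb : |db| < ε := by rw [hdbdef]; exact hy
  have hA : (a:ℝ) = s3*(x:ℝ) - da := by rw [hdadef]; ring
  have hB : (b:ℝ) = s3*(y:ℝ) - db := by rw [hdbdef]; ring
  have hda2 : da^2 < ε^2 := sq_lt_of_abs_lt da ε hda
  have hdb2 : db^2 < ε^2 := sq_lt_of_abs_lt db ε hdb
  -- key scalar products
  obtain ⟨t2, ht2def⟩ : ∃ t, t = (x:ℝ)*da + (y:ℝ)*db := ⟨_, rfl⟩
  obtain ⟨t1, ht1def⟩ : ∃ t, t = (x:ℝ)*db - (y:ℝ)*da := ⟨_, rfl⟩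
  have ht2sq : t2^2 ≤ r^2*(da^2+db^2) := by
    have h' : t2^2 ≤ ((x:ℝ)^2+(y:ℝ)^2)*(da^2+db^2) := by
      rw [ht2def]; exact cauchy2 _ _ _ _
    rwa [← hr2] at h'
  have ht1sq : t1^2 ≤ r^2*(da^2+db^2) := by
    have h' : t1^2 ≤ ((x:ℝ)^2+(y:ℝ)^2)*(da^2+db^2) := by
      rw [ht1def, show ((x:ℝ)*db - (y:ℝ)*da) = ((x:ℝ)*db + (y:ℝ)*(-da)) from by ring,
        show da^2+db^2 = db^2+(-da)^2 from by ring]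
      exact cauchy2 _ _ _ _
    rwa [← hr2] at h'
  have hrsq_pos : (0:ℝ) < r^2/2 := by linarith
  have hc12 : da^2+db^2 ≤ 1/2 := by linarith
  have hKbound : r^2*(da^2+db^2) ≤ (r^2/2)^2 := by
    calc r^2*(da^2+db^2) ≤ r^2*(1/2) :=
          mul_le_mul_of_nonneg_left hc12 (sq_nonneg r)
    _ ≤ (r^2/2)^2 := half_sq r hr5
  have ht2le : t2 ≤ r^2/2 := le_of_sq_le_sq' _ _ hrsq_pos (le_trans ht2sq hKbound)
  have ht2ge : -(r^2/2) ≤ t2 := neg_le_of_sq_le_sq' _ _ hrsq_pos (le_trans ht2sq hKbound)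
  have ht1le : t1 ≤ r^2/2 := le_of_sq_le_sq' _ _ hrsq_pos (le_trans ht1sq hKbound)
  have ht1ge : -(r^2/2) ≤ t1 := neg_le_of_sq_le_sq' _ _ hrsq_pos (le_trans ht1sq hKbound)
  -- the triangle
  have hdetreal : 2*((x:ℝ)*(a:ℝ) + (y:ℝ)*(b:ℝ)) = 2*s3*r^2 - 2*t2 := by
    rw [hA, hB, ht2def, hr2]; ring
  have hdetpos_real : (0:ℝ) < 2*((x:ℝ)*(a:ℝ) + (y:ℝ)*(b:ℝ)) := by
    rw [hdetreal]
    have hge : 1*r^2 ≤ s3*r^2 := mul_le_mul_of_nonneg_right hs3ge (sq_nonneg r)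
    linarith
  have hdetposZ : (0:ℤ) < 2*(x*a + y*b) := by exact_mod_cast hdetpos_real
  have e1 : det2 (sub2 ((2*x, 2*y) : ℤ × ℤ) ((0,0) : ℤ × ℤ))
      (sub2 ((x-b, y+a) : ℤ × ℤ) ((0,0) : ℤ × ℤ)) = 2*(x*a + y*b) := by
    simp only [det2, sub2]; ring
  -- side PQ
  have sPQ : D ≤ Real.sqrt (normSq2 (sub2 ((2*x, 2*y) : ℤ × ℤ) ((0,0) : ℤ × ℤ))) := by
    have e : ((normSq2 (sub2 ((2*x, 2*y) : ℤ × ℤ) ((0,0) : ℤ × ℤ)) : ℤ) : ℝ)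
        = (2*r)^2 := by
      simp only [normSq2, sub2]
      push_cast
      rw [show ((2*r)^2 : ℝ) = 4*r^2 by ring, hr2]; ring
    rw [e, Real.sqrt_sq (by linarith : (0:ℝ) ≤ 2*r)]
    linarith [mul_pos hs2pos hε0]
  -- side RQ
  have sRQ : D ≤ Real.sqrt (normSq2 (sub2 ((x-b, y+a) : ℤ × ℤ) ((2*x, 2*y) : ℤ × ℤ))) := by
    obtain ⟨u, hu⟩ : ∃ u, u = (x:ℝ) + s3*(y:ℝ) := ⟨_, rfl⟩
    obtain ⟨v, hv⟩ : ∃ v, v = s3*(x:ℝ) - (y:ℝ) := ⟨_, rfl⟩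
    have huv : u^2 + v^2 = 4*r^2 := by
      rw [hu, hv, hr2]; linear_combination ((x:ℝ)^2+(y:ℝ)^2)*hs3sq
    have hkey := side_aux D ε r u v da (-db) hr5 hε0 (by linarith) hD0 huv hda
      (by rwa [abs_neg]) (by rw [hs2def] at hlo; linarith)
    have e : ((normSq2 (sub2 ((x-b, y+a) : ℤ × ℤ) ((2*x, 2*y) : ℤ × ℤ)) : ℤ) : ℝ)
        = (u + -db)^2 + (v - da)^2 := by
      simp only [normSq2, sub2]
      push_cast
      rw [hu, hv, hA, hB]; ring
    rw [e]
    calc D = Real.sqrt (D^2) := (Real.sqrt_sq hD0).symm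
    _ ≤ _ := Real.sqrt_le_sqrt hkey
  -- side PR
  have sPR : D ≤ Real.sqrt (normSq2 (sub2 ((0,0) : ℤ × ℤ) ((x-b, y+a) : ℤ × ℤ))) := by
    obtain ⟨u, hu⟩ : ∃ u, u = (x:ℝ) - s3*(y:ℝ) := ⟨_, rfl⟩
    obtain ⟨v, hv⟩ : ∃ v, v = (y:ℝ) + s3*(x:ℝ) := ⟨_, rfl⟩
    have huv : u^2 + v^2 = 4*r^2 := by
      rw [hu, hv, hr2]; linear_combination ((x:ℝ)^2+(y:ℝ)^2)*hs3sq
    have hkey := side_aux D ε r u v da db hr5 hε0 (by linarith) hD0 huv hda hdb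
      (by rw [hs2def] at hlo; linarith)
    have e : ((normSq2 (sub2 ((0,0) : ℤ × ℤ) ((x-b, y+a) : ℤ × ℤ)) : ℤ) : ℝ)
        = (u + db)^2 + (v - da)^2 := by
      simp only [normSq2, sub2]
      push_cast
      rw [hu, hv, hA, hB]; ring
    rw [e]
    calc D = Real.sqrt (D^2) := (Real.sqrt_sq hD0).symm
    _ ≤ _ := Real.sqrt_le_sqrt hkey
  -- dot products
  have dP : 0 ≤ dot2 (sub2 ((2*x, 2*y) : ℤ × ℤ) ((0,0) : ℤ × ℤ))
      (sub2 ((x-b, y+a) : ℤ × ℤ) ((0,0) : ℤ × ℤ)) := by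
    have hreal : (0:ℝ) ≤ ((dot2 (sub2 ((2*x, 2*y) : ℤ × ℤ) ((0,0) : ℤ × ℤ))
        (sub2 ((x-b, y+a) : ℤ × ℤ) ((0,0) : ℤ × ℤ)) : ℤ) : ℝ) := by
      have e : ((dot2 (sub2 ((2*x, 2*y) : ℤ × ℤ) ((0,0) : ℤ × ℤ))
          (sub2 ((x-b, y+a) : ℤ × ℤ) ((0,0) : ℤ × ℤ)) : ℤ) : ℝ) = 2*r^2 + 2*t1 := by
        simp only [dot2, sub2]
        push_cast
        rw [hA, hB, ht1def, hr2]; ring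
      rw [e]; linarith
    exact_mod_cast hreal
  have dQ : 0 ≤ dot2 (sub2 ((0,0) : ℤ × ℤ) ((2*x, 2*y) : ℤ × ℤ))
      (sub2 ((x-b, y+a) : ℤ × ℤ) ((2*x, 2*y) : ℤ × ℤ)) := by
    have hreal : (0:ℝ) ≤ ((dot2 (sub2 ((0,0) : ℤ × ℤ) ((2*x, 2*y) : ℤ × ℤ))
        (sub2 ((x-b, y+a) : ℤ × ℤ) ((2*x, 2*y) : ℤ × ℤ)) : ℤ) : ℝ) := by
      have e : ((dot2 (sub2 ((0,0) : ℤ × ℤ) ((2*x, 2*y) : ℤ × ℤ))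
          (sub2 ((x-b, y+a) : ℤ × ℤ) ((2*x, 2*y) : ℤ × ℤ)) : ℤ) : ℝ) = 2*r^2 - 2*t1 := by
        simp only [dot2, sub2]
        push_cast
        rw [hA, hB, ht1def, hr2]; ring
      rw [e]; linarith
    exact_mod_cast hreal
  have dR : 0 ≤ dot2 (sub2 ((0,0) : ℤ × ℤ) ((x-b, y+a) : ℤ × ℤ))
      (sub2 ((2*x, 2*y) : ℤ × ℤ) ((x-b, y+a) : ℤ × ℤ)) := by
    have hreal : (0:ℝ) ≤ ((dot2 (sub2 ((0,0) : ℤ × ℤ) ((x-b, y+a) : ℤ × ℤ))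
        (sub2 ((2*x, 2*y) : ℤ × ℤ) ((x-b, y+a) : ℤ × ℤ)) : ℤ) : ℝ) := by
      have e : ((dot2 (sub2 ((0,0) : ℤ × ℤ) ((x-b, y+a) : ℤ × ℤ))
          (sub2 ((2*x, 2*y) : ℤ × ℤ) ((x-b, y+a) : ℤ × ℤ)) : ℤ) : ℝ)
          = 2*r^2 - 2*(s3*t2) + (da^2 + db^2) := by
        simp only [dot2, sub2]
        push_cast
        rw [hA, hB, ht2def, hr2]
        linear_combination ((x:ℝ)^2+(y:ℝ)^2)*hs3sq
      rw [e]
      have p1 : s3*t2 ≤ s3*(r^2/2) := mul_le_mul_of_nonneg_left ht2le hs3pos.le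
      have p2 : s3*(r^2) ≤ 2*(r^2) := mul_le_mul_of_nonneg_right hs3le (sq_nonneg r)
      linarith [sq_nonneg da, sq_nonneg db]
    exact_mod_cast hreal
  -- membership
  have hInT : InT D ((0,0) : ℤ × ℤ) ((2*x, 2*y) : ℤ × ℤ) ((x-b, y+a) : ℤ × ℤ) := by
    refine ⟨?_, sPQ, sRQ, sPR, dP, dQ, dR⟩
    rw [e1]; exact ne_of_gt hdetposZ
  have hmem : (2*(x*a + y*b)).natAbs ∈
      {n : ℕ | ∃ P Q R : ℤ × ℤ, InT D P Q R ∧ n = twiceArea P Q R} :=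
    ⟨_, _, _, hInT, by rw [twiceArea, e1]⟩
  have hS : S D ≤ (2*(x*a + y*b)).natAbs := Nat.sInf_le hmem
  have hcast : (((2*(x*a + y*b)).natAbs : ℕ) : ℝ) = ((2*(x*a + y*b) : ℤ) : ℝ) := by
    rw [Nat.cast_natAbs, abs_of_nonneg hdetposZ.le]
  have hSR : (S D : ℝ) ≤ 2*s3*r^2 - 2*t2 := by
    calc (S D : ℝ) ≤ (((2*(x*a + y*b)).natAbs : ℕ) : ℝ) := by exact_mod_cast hS
    _ = ((2*(x*a + y*b) : ℤ) : ℝ) := hcast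
    _ = 2*((x:ℝ)*(a:ℝ) + (y:ℝ)*(b:ℝ)) := by push_cast; ring
    _ = 2*s3*r^2 - 2*t2 := hdetreal
  -- final estimate
  have hmt2 : (s2*(r*ε))^2 = 2*(r*ε)^2 := by
    have h' : (s2*(r*ε))^2 = s2^2*(r*ε)^2 := by ring
    rw [h', hs2sq]
  have ht2neg : -(s2*(r*ε)) ≤ t2 := by
    have hrpos : (0:ℝ) < r := by linarith
    refine neg_le_of_sq_le_sq' _ _ (by positivity) ?_
    rw [hmt2]
    have hc2 : da^2+db^2 ≤ 2*ε^2 := by linarith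
    have h'' := mul_le_mul_of_nonneg_left hc2 (sq_nonneg r)
    linarith [ht2sq, h'']
  have h2r : (2*r)^2 ≤ (D+2*ε)^2 := by
    rw [pow_two, pow_two]
    exact mul_self_le_mul_self (by linarith) hhi
  have f1 : s3*((2*r)^2) ≤ s3*((D+2*ε)^2) := mul_le_mul_of_nonneg_left h2r hs3pos.le
  have hrε : r*ε ≤ ((D+2*ε)/2)*ε := mul_le_mul_of_nonneg_right (by linarith) hε0.le
  have f2 : s2*(r*ε) ≤ s2*(((D+2*ε)/2)*ε) := mul_le_mul_of_nonneg_left hrε hs2pos.le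
  have p1 : s3*ε^2 ≤ 9/5*ε^2 := mul_le_mul_of_nonneg_right hs3le' (sq_nonneg ε)
  have p2 : s2*ε^2 ≤ 3/2*ε^2 := mul_le_mul_of_nonneg_right hs2le' (sq_nonneg ε)
  have hε2 : (0:ℝ) < ε^2 := by positivity
  rw [← hs3def, ← hs2def]
  calc (S D : ℝ) ≤ 2*s3*r^2 - 2*t2 := hSR
  _ < s3 / 2 * D ^ 2 + (2 * s3 + s2) * D * ε + 7 * ε ^ 2 := by linarith [f1, f2, ht2neg, p1, p2, hε2]
end

section
/- There exists an absolute constant C₁ > 0 such that for every real N > 100 and every real ε with 0 < ε < 1, there exist integers x and y satisfying ‖√3·x‖ < ε, ‖√3·y‖ < ε, and N ≤ x² + y² ≤ N + C₁·(ε⁻² + N^{1/4}·ε^{−3/2}). -/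
local notation "√3" => Real.sqrt 3

lemma distNearestInt_le (x : ℝ) (m : ℤ) : distNearestInt x ≤ |x - m| := by
  unfold distNearestInt
  rcases le_or_gt (1/2) (|x - m|) with h | h
  · exact le_trans (abs_sub_round x) h
  · have hm : round x = m := by
      rw [round_eq]
      rw [abs_lt] at h
      apply Int.floor_eq_iff.mpr
      constructor <;> push_cast <;> linarith
    rw [hm]

lemma sqrt3_sq : (√3) ^ 2 = 3 := Real.sq_sqrt (by norm_num)
lemma sqrt3_lb : (1.7 : ℝ) < √3 := by
  nlinarith [sqrt3_sq, Real.sqrt_nonneg 3]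
lemma sqrt3_ub : √3 < 1.8 := by
  nlinarith [sqrt3_sq, Real.sqrt_nonneg 3]

lemma pell_seq (n : ℕ) : ∃ s t u v : ℤ,
    (s : ℝ) - √3 * t = (2 - √3) ^ n ∧
    (s : ℝ) + √3 * t = (2 + √3) ^ n ∧
    √3 * v - u = (√3 - 1) * (2 - √3) ^ n ∧
    (u : ℝ) + √3 * v = (√3 + 1) * (2 + √3) ^ n := by
  induction n with
  | zero => exact ⟨1, 0, 1, 1, by norm_num, by norm_num, by push_cast; ring, by push_cast; ring⟩
  | succ n ih =>
    obtain ⟨s, t, u, v, h1, h2, h3, h4⟩ := ih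
    refine ⟨2*s + 3*t, s + 2*t, 2*u + 3*v, u + 2*v, ?_, ?_, ?_, ?_⟩ <;> push_cast <;>
      rw [pow_succ]
    · linear_combination (2 - √3) * h1 - (t : ℝ) * sqrt3_sq
    · linear_combination (2 + √3) * h2 - (t : ℝ) * sqrt3_sq
    · linear_combination (2 - √3) * h3 + (v : ℝ) * sqrt3_sq
    · linear_combination (2 + √3) * h4 - (v : ℝ) * sqrt3_sq

lemma exists_lam (ε : ℝ) (hε0 : 0 < ε) (hε1 : ε < 1) :
    ∃ s t u v : ℤ, ∃ lam : ℝ, 0 < lam ∧ lam < ε ∧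
      (s : ℝ) - √3 * t = lam ∧ √3 * v - u = (√3 - 1) * lam ∧
      0 ≤ t ∧ 1 ≤ v ∧ ((t : ℝ) + v) ≤ 5 / ε := by
  classical
  have hq0 : (0 : ℝ) < 2 - √3 := by nlinarith [sqrt3_ub]
  have hq1 : (2 : ℝ) - √3 < 1 := by nlinarith [sqrt3_lb]
  have hex : ∃ n : ℕ, (2 - √3) ^ n < ε :=
    exists_pow_lt_of_lt_one hε0 hq1
  set n₀ := Nat.find hex with hn₀
  have hspec : (2 - √3) ^ n₀ < ε := Nat.find_spec hex
  have hn₀ne : n₀ ≠ 0 := by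
    intro h
    rw [h] at hspec
    simp at hspec; linarith
  obtain ⟨m, hm⟩ := Nat.exists_eq_succ_of_ne_zero hn₀ne
  have hmin : ¬ ((2 - √3) ^ m < ε) := Nat.find_min hex (by omega)
  push_neg at hmin
  have hεlam : (2 - √3) * ε ≤ (2 - √3) ^ n₀ := by
    rw [hm, pow_succ]
    calc (2 - √3) * ε ≤ (2 - √3) * (2 - √3) ^ m := mul_le_mul_of_nonneg_left hmin hq0.le
      _ = (2 - √3) ^ m * (2 - √3) := mul_comm _ _
  obtain ⟨s, t, u, v, h1, h2, h3, h4⟩ := pell_seq n₀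
  set lam : ℝ := (2 - √3) ^ n₀ with hlamdef
  set Λ : ℝ := (2 + √3) ^ n₀ with hΛdef
  have hlam0 : 0 < lam := pow_pos hq0 n₀
  have hΛ0 : 0 < Λ := pow_pos (by nlinarith [sqrt3_lb]) n₀
  have hone : lam * Λ = 1 := by
    rw [hlamdef, hΛdef, ← mul_pow]
    have : (2 - √3) * (2 + √3) = 1 := by linear_combination -sqrt3_sq
    rw [this, one_pow]
  have hlam1 : lam ≤ 1 := pow_le_one₀ hq0.le hq1.le
  have hΛ1 : 1 ≤ Λ := by nlinarith
  -- t ≥ 0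
  have ht : 0 ≤ t := by
    have : (0 : ℝ) ≤ t := by nlinarith [h1, h2, sqrt3_lb]
    exact_mod_cast this
  have hv : 1 ≤ v := by
    have hvr : (0 : ℝ) < v := by nlinarith [h3, h4, sqrt3_lb]
    have : (0 : ℤ) < v := by exact_mod_cast hvr
    omega
  refine ⟨s, t, u, v, lam, hlam0, hspec, h1, h3, ht, hv, ?_⟩
  -- size bound
  have h5 : ε * Λ ≤ 2 + √3 := by
    have h6 : (2 - √3) * ε * Λ ≤ 1 := by
      calc (2 - √3) * ε * Λ ≤ lam * Λ := mul_le_mul_of_nonneg_right hεlam hΛ0.le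
      _ = 1 := hone
    nlinarith [sqrt3_sq, sqrt3_lb, sqrt3_ub, hΛ0, hε0]
  have hE : 2 * √3 * ((t : ℝ) + v) = (2 + √3) * Λ + (√3 - 2) * lam := by
    linear_combination h2 - h1 + h4 + h3
  rw [le_div_iff₀ hε0]
  nlinarith [hE, h5, sqrt3_lb, sqrt3_ub, hlam0, hε0, hΛ0,
    mul_le_mul_of_nonneg_left h5 (by nlinarith [sqrt3_lb] : (0:ℝ) ≤ 2 + √3)]

lemma walk (s t u v : ℤ) (lam ε : ℝ)
    (h1 : (s : ℝ) - √3 * t = lam)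
    (h3 : √3 * v - u = (√3 - 1) * lam)
    (hlam0 : 0 < lam) (hlamε : lam < ε)
    (ht : 0 ≤ t) (hv : 1 ≤ v) :
    ∀ r : ℝ, 0 ≤ r → ∃ z : ℤ, 0 ≤ z ∧ r ≤ z ∧ (z : ℝ) < r + ((t : ℝ) + v) ∧
      distNearestInt (√3 * z) < ε := by
  classical
  intro r hr
  set θ : ℝ := √3 - 1 with hθdef
  have hθ0 : 0 < θ := by rw [hθdef]; nlinarith [sqrt3_lb]
  have hθ1 : θ < 1 := by rw [hθdef]; nlinarith [sqrt3_ub]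
  set f : ℕ → ℤ := fun b => ⌊(b : ℝ) * θ⌋ * t + b * v with hf
  have hdist : ∀ b : ℕ, distNearestInt (√3 * (f b : ℝ)) < ε := by
    intro b
    have key : √3 * ((f b : ℤ) : ℝ)
        = ((⌊(b : ℝ) * θ⌋ * s + b * u : ℤ) : ℝ) + lam * Int.fract ((b : ℝ) * θ) := by
      simp only [hf, Int.fract]
      push_cast
      rw [hθdef]
      rw [hθdef] at h3
      linear_combination (-(⌊(b : ℝ) * ((√3:ℝ) - 1)⌋ : ℝ)) * h1 + (b : ℝ) * h3
    calc distNearestInt (√3 * (f b : ℝ))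
        ≤ |√3 * (f b : ℝ) - ((⌊(b : ℝ) * θ⌋ * s + b * u : ℤ) : ℝ)| :=
          distNearestInt_le _ _
      _ = |lam * Int.fract ((b : ℝ) * θ)| := by rw [key]; ring_nf
      _ ≤ lam := by
          rw [abs_of_nonneg (mul_nonneg hlam0.le (Int.fract_nonneg _))]
          exact mul_le_of_le_one_right hlam0.le (Int.fract_lt_one _).le
      _ < ε := hlamε
  have hstep : ∀ b : ℕ, f b + 1 ≤ f (b + 1) ∧ f (b + 1) ≤ f b + (t + v) := by
    intro b
    have hfl : ⌊(b : ℝ) * θ⌋ ≤ ⌊((b : ℝ) + 1) * θ⌋ := by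
      apply Int.floor_le_floor
      nlinarith [Nat.cast_nonneg (α := ℝ) b]
    have hfu : ⌊((b : ℝ) + 1) * θ⌋ ≤ ⌊(b : ℝ) * θ⌋ + 1 := by
      have h' : ((b : ℝ) + 1) * θ ≤ (b : ℝ) * θ + 1 := by nlinarith
      calc ⌊((b : ℝ) + 1) * θ⌋ ≤ ⌊(b : ℝ) * θ + 1⌋ := Int.floor_le_floor h'
        _ = ⌊(b : ℝ) * θ⌋ + 1 := by
            rw [show ((1:ℝ)) = ((1:ℤ):ℝ) by norm_num, Int.floor_add_intCast]
    constructor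
    · simp only [hf]
      push_cast
      nlinarith [mul_le_mul_of_nonneg_right hfl ht, hv]
    · simp only [hf]
      push_cast
      nlinarith [mul_le_mul_of_nonneg_right hfu ht, hv]
  have hge : ∀ b : ℕ, (b : ℤ) ≤ f b := by
    intro b
    induction b with
    | zero => simp [hf]
    | succ c ihc =>
      have := (hstep c).1
      push_cast
      omega
  have hex : ∃ b : ℕ, r ≤ (f b : ℝ) := by
    refine ⟨⌈r⌉₊, ?_⟩
    have h1' : r ≤ (⌈r⌉₊ : ℝ) := Nat.le_ceil r
    have h2' : ((⌈r⌉₊ : ℤ) : ℝ) ≤ (f ⌈r⌉₊ : ℝ) := by exact_mod_cast hge ⌈r⌉₊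
    push_cast at h2' ⊢
    linarith
  set b₀ := Nat.find hex with hb₀
  have hspec : r ≤ (f b₀ : ℝ) := Nat.find_spec hex
  refine ⟨f b₀, ?_, hspec, ?_, hdist b₀⟩
  · have := hge b₀; omega
  · rcases Nat.eq_zero_or_pos b₀ with h0 | hpos
    · have hf0 : f b₀ = 0 := by rw [h0]; simp [hf]
      rw [hf0]
      have : (1 : ℝ) ≤ (t : ℝ) + v := by
        have ht' : (0:ℝ) ≤ t := by exact_mod_cast ht
        have hv' : (1:ℝ) ≤ v := by exact_mod_cast hv
        linarith
      push_cast
      linarith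
    · obtain ⟨c, hc⟩ := Nat.exists_eq_succ_of_ne_zero (Nat.pos_iff_ne_zero.mp hpos)
      have hmin : ¬ (r ≤ (f c : ℝ)) := Nat.find_min hex (by omega)
      push_neg at hmin
      have := (hstep c).2
      rw [hc]
      have h2' : ((f (c+1) : ℤ) : ℝ) ≤ (f c : ℝ) + ((t:ℝ) + v) := by exact_mod_cast this
      linarith

/-- There is an absolute constant `C₁ > 0` such that for every `N > 100` and
`0 < ε < 1` there are integers `x`, `y` with `‖√3·x‖ < ε`, `‖√3·y‖ < ε`, and
`N ≤ x² + y² ≤ N + C₁·(ε⁻² + N^{1/4}·ε^{−3/2})`. -/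
theorem find_pair_approx :
    ∃ C₁ > (0 : ℝ), ∀ N : ℝ, 100 < N → ∀ ε : ℝ, 0 < ε → ε < 1 →
      ∃ x y : ℤ,
        distNearestInt (Real.sqrt 3 * x) < ε ∧
        distNearestInt (Real.sqrt 3 * y) < ε ∧
        N ≤ (x : ℝ) ^ 2 + (y : ℝ) ^ 2 ∧
        (x : ℝ) ^ 2 + (y : ℝ) ^ 2
          ≤ N + C₁ * (ε ⁻¹ ^ 2 + N ^ ((1 : ℝ) / 4) * ε ^ (-(3 : ℝ) / 2)) := by
  refine ⟨400, by norm_num, ?_⟩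
  intro N hN ε hε0 hε1
  obtain ⟨s, t, u, v, lam, hlam0, hlamε, h1, h3, ht, hv, hL5⟩ := exists_lam ε hε0 hε1
  have W := walk s t u v lam ε h1 h3 hlam0 hlamε ht hv
  obtain ⟨L, hLdef⟩ : ∃ L : ℝ, (t : ℝ) + v = L := ⟨_, rfl⟩
  rw [hLdef] at W
  have hL1 : (1 : ℝ) ≤ L := by
    have ht' : (0:ℝ) ≤ t := by exact_mod_cast ht
    have hv' : (1:ℝ) ≤ v := by exact_mod_cast hv
    rw [← hLdef]; linarith
  have hL5' : L ≤ 5 / ε := hLdef ▸ hL5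
  have hL0 : (0 : ℝ) ≤ L := by linarith
  clear h1 h3 ht hv hlam0 hlamε hL5 hLdef
  obtain ⟨A, hAdef⟩ : ∃ a : ℝ, ε⁻¹ = a := ⟨_, rfl⟩
  rw [hAdef]
  have hA0 : 0 < A := by rw [← hAdef]; positivity
  have hA1 : 1 ≤ A := by rw [← hAdef]; exact one_le_inv_iff₀.mpr ⟨hε0, hε1.le⟩
  have hL5A : L ≤ 5 * A := by
    rw [← hAdef]; rw [div_eq_mul_inv] at hL5'; exact hL5'
  obtain ⟨B, hBdef⟩ : ∃ b : ℝ, Real.sqrt A = b := ⟨_, rfl⟩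
  have hB0 : 0 ≤ B := hBdef ▸ Real.sqrt_nonneg A
  have hB2 : B ^ 2 = A := hBdef ▸ Real.sq_sqrt hA0.le
  have hB1 : 1 ≤ B := by
    rw [← hBdef, show (1:ℝ) = Real.sqrt 1 from (Real.sqrt_one).symm]
    exact Real.sqrt_le_sqrt hA1
  have hN0 : (0 : ℝ) < N := by linarith
  obtain ⟨P, hPdef⟩ : ∃ p : ℝ, N ^ ((1 : ℝ) / 4) = p := ⟨_, rfl⟩
  rw [hPdef]
  have hP0 : 0 < P := by rw [← hPdef]; exact Real.rpow_pos_of_pos hN0 _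
  obtain ⟨sqN, hsqNdef⟩ : ∃ q : ℝ, Real.sqrt N = q := ⟨_, rfl⟩
  have hsqN2 : sqN ^ 2 = N := hsqNdef ▸ Real.sq_sqrt hN0.le
  have hsqN0 : 0 < sqN := hsqNdef ▸ Real.sqrt_pos.mpr hN0
  have hP2 : P ^ 2 = sqN := by
    rw [← hPdef, ← hsqNdef, Real.sqrt_eq_rpow, ← Real.rpow_natCast (N ^ ((1:ℝ)/4)) 2,
      ← Real.rpow_mul hN0.le]
    norm_num
  have hεexp : ε ^ (-(3 : ℝ) / 2) = A * B := by
    have hsplit : (-(3 : ℝ) / 2) = (-1 : ℝ) + (-(1/2) : ℝ) := by norm_num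
    rw [hsplit, Real.rpow_add hε0, Real.rpow_neg_one]
    rw [hAdef]
    congr 1
    rw [Real.rpow_neg hε0.le, ← Real.sqrt_eq_rpow, ← hBdef, ← hAdef, Real.sqrt_inv]
  rw [hεexp]
  have hterm : 0 ≤ P * (A * B) := by positivity
  have hAsq : 0 ≤ A ^ 2 := sq_nonneg A
  rcases le_or_gt sqN (2 * L) with hcase | hcase
  · -- small N case
    obtain ⟨x, hx0, hxr, hxlt, hxd⟩ := W sqN hsqN0.le
    have hx0' : (0:ℝ) ≤ x := by exact_mod_cast hx0
    refine ⟨x, 0, hxd, ?_, ?_, ?_⟩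
    · simp [distNearestInt]
      exact hε0
    · push_cast
      have hsq : sqN ^ 2 ≤ (x:ℝ) ^ 2 := pow_le_pow_left₀ hsqN0.le hxr 2
      norm_num
      linarith
    · push_cast
      have hx15 : (x : ℝ) ≤ 15 * A := by linarith
      have hxsq : (x : ℝ) ^ 2 ≤ (15 * A) ^ 2 := pow_le_pow_left₀ hx0' hx15 2
      have hexp : (15 * A) ^ 2 = 225 * A ^ 2 := by ring
      norm_num
      linarith
  · -- main case
    have hr1 : 0 ≤ sqN - L := by linarith
    obtain ⟨x, hx0, hxr, hxlt, hxd⟩ := W (sqN - L) hr1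
    have hx0' : (0:ℝ) ≤ x := by exact_mod_cast hx0
    have hxltsqN : (x : ℝ) < sqN := by linarith
    obtain ⟨M, hMdef⟩ : ∃ m : ℝ, N - (x : ℝ) ^ 2 = m := ⟨_, rfl⟩
    have hxsq : (x:ℝ) ^ 2 ≤ sqN ^ 2 := pow_le_pow_left₀ hx0' hxltsqN.le 2
    have hM0 : 0 ≤ M := by rw [← hMdef]; linarith
    have hMle : M ≤ 2 * L * sqN := by
      have hmm : (sqN - (x:ℝ)) * (sqN + (x:ℝ)) ≤ L * (2 * sqN) :=
        mul_le_mul (by linarith) (by linarith) (by linarith) hL0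
      have hexp : (sqN - (x:ℝ)) * (sqN + (x:ℝ)) = sqN ^ 2 - (x:ℝ) ^ 2 := by ring
      rw [← hMdef]; linarith
    have hMle' : M ≤ 10 * (A * P ^ 2) := by
      rw [← hP2] at hMle
      have h2' := mul_le_mul_of_nonneg_right hL5A (sq_nonneg P)
      have e1 : 2 * L * P ^ 2 = 2 * (L * P ^ 2) := by ring
      have e2 : 5 * A * P ^ 2 = 5 * (A * P ^ 2) := by ring
      rw [e1] at hMle
      rw [e2] at h2'
      linarith
    obtain ⟨sqM, hsqMdef⟩ : ∃ q : ℝ, Real.sqrt M = q := ⟨_, rfl⟩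
    have hsqM2 : sqM ^ 2 = M := hsqMdef ▸ Real.sq_sqrt hM0
    have hsqM0 : 0 ≤ sqM := hsqMdef ▸ Real.sqrt_nonneg M
    obtain ⟨y, hy0, hyr, hylt, hyd⟩ := W sqM hsqM0
    have hy0' : (0:ℝ) ≤ y := by exact_mod_cast hy0
    refine ⟨x, y, hxd, hyd, ?_, ?_⟩
    · have hy2 : sqM ^ 2 ≤ (y : ℝ) ^ 2 := pow_le_pow_left₀ hsqM0 hyr 2
      rw [hsqM2, ← hMdef] at hy2
      linarith
    · have hy2 : (y : ℝ) ^ 2 ≤ (sqM + L) ^ 2 := pow_le_pow_left₀ hy0' hylt.le 2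
      have hexp : (sqM + L) ^ 2 = sqM ^ 2 + 2 * (L * sqM) + L ^ 2 := by ring
      have hMsq : M ≤ (4 * B * P) ^ 2 := by
        have h16 : (4 * B * P) ^ 2 = 16 * (A * P ^ 2) := by
          calc (4 * B * P) ^ 2 = 16 * (B ^ 2 * P ^ 2) := by ring
            _ = 16 * (A * P ^ 2) := by rw [hB2]
        have hap : 0 ≤ A * P ^ 2 := mul_nonneg hA0.le (sq_nonneg P)
        linarith
      have hsqMle : sqM ≤ 4 * B * P := by
        rw [← hsqMdef]
        calc Real.sqrt M ≤ Real.sqrt ((4 * B * P) ^ 2) := Real.sqrt_le_sqrt hMsq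
          _ = 4 * B * P := Real.sqrt_sq (by positivity)
      have h40 : 2 * (L * sqM) ≤ 40 * (P * (A * B)) := by
        have hmm : L * sqM ≤ 5 * A * (4 * B * P) :=
          mul_le_mul hL5A hsqMle hsqM0 (by positivity)
        have he : 5 * A * (4 * B * P) = 20 * (P * (A * B)) := by ring
        rw [he] at hmm
        linarith
      have h25 : L ^ 2 ≤ 25 * A ^ 2 := by
        have hmm : L * L ≤ (5 * A) * (5 * A) := mul_le_mul hL5A hL5A hL0 (by positivity)
        have he : (5 * A) * (5 * A) = 25 * A ^ 2 := by ring
        have he2 : L * L = L ^ 2 := by ring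
        rw [he, he2] at hmm
        exact hmm
      have hfin : (y:ℝ) ^ 2 ≤ M + 2 * (L * sqM) + L ^ 2 := by
        rw [← hsqM2]; linarith
      rw [← hMdef] at hfin
      linarith
end
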